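/- arXiv:1812.05142 — 8 statements merged into one kernel-verified Lean document; each statement's English description precedes it below -/
import Mathlib

section
/- Let V_ABC = [[A, X, Y], [Xᵀ, B, Z], [Yᵀ, Zᵀ, C]] be a real symmetric positive definite tripartite covariance matrix. Then conditioning on more systems decreases the Schur complement: V_ABC / V_BC ≤ V_AC / V_C in the Loewner order; explicitly, A − [X Y]·V_BC^{-1}·[X Y]ᵀ ≤ A − Y·C^{-1}·Yᵀ, where [X Y] denotes the block row formed by X and Y. -/
/-!
Write `V = V_BC`, `W = [X Y]` and let `E` be the inclusion of the `C`-coordinates, so that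
`Y = W E` and `C = Eᴴ V E`. The claim becomes `W (V⁻¹ - E (Eᴴ V E)⁻¹ Eᴴ) Wᴴ ≥ 0`, and the middle
factor is the Schur complement of `[[V⁻¹, E], [Eᴴ, Eᴴ V E]] = N V⁻¹ Nᴴ` with `N = [1; Eᴴ V]`,
which is positive semidefinite as a congruence of `V⁻¹`.
-/

open Matrix

namespace Matrix.PosDef

variable {K : Type*} [Field K] [PartialOrder K] [StarRing K] [StarOrderedRing K]
  {m n k : Type*} [Fintype m] [Fintype n] [Fintype k] [DecidableEq n] [DecidableEq k]
  {V : Matrix n n K} {E : Matrix n k K}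

theorem posSemidef_inv_sub_compression (hV : V.PosDef) (hC : (Eᴴ * V * E).PosDef) :
    (V⁻¹ - E * (Eᴴ * V * E)⁻¹ * Eᴴ).PosSemidef := by
  have := hV.isUnit.invertible
  have := hC.isUnit.invertible
  have hblock : fromRows 1 (Eᴴ * V) * V⁻¹ * (fromRows 1 (Eᴴ * V))ᴴ =
      fromBlocks V⁻¹ E Eᴴ (Eᴴ * V * E) := by
    rw [conjTranspose_fromRows_eq_fromCols_conjTranspose, fromRows_mul, fromRows_mul_fromCols]
    simp only [conjTranspose_one, conjTranspose_mul, conjTranspose_conjTranspose,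
      hV.isHermitian.eq, Matrix.one_mul, Matrix.mul_one, Matrix.mul_assoc,
      inv_mul_cancel_left_of_invertible, mul_inv_of_invertible]
  rw [← PosDef.fromBlocks₂₂ _ _ hC, ← hblock]
  exact hV.inv.posSemidef.mul_mul_conjTranspose_same _

theorem posSemidef_mul_inv_mul_sub_compression (hV : V.PosDef) (hC : (Eᴴ * V * E).PosDef)
    (W : Matrix m n K) :
    (W * V⁻¹ * Wᴴ - W * E * (Eᴴ * V * E)⁻¹ * (W * E)ᴴ).PosSemidef := by
  simpa only [Matrix.mul_sub, Matrix.sub_mul, conjTranspose_mul, Matrix.mul_assoc] using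
    (hV.posSemidef_inv_sub_compression hC).mul_mul_conjTranspose_same W

end Matrix.PosDef

/-- **Conditioning on more systems decreases the Schur complement.**
For a real symmetric positive definite tripartite covariance matrix
`V_ABC = [[A, X, Y], [Xᵀ, B, Z], [Yᵀ, Zᵀ, C]]` we have
`V_ABC / V_BC ≤ V_AC / V_C` in the Loewner order, i.e.
`A − [X Y]·V_BC⁻¹·[X Y]ᵀ ≤ A − Y·C⁻¹·Yᵀ`. -/
theorem schur_complement_mono_partial_trace (a b c : ℕ)
    (A : Matrix (Fin a) (Fin a) ℝ) (B : Matrix (Fin b) (Fin b) ℝ)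
    (C : Matrix (Fin c) (Fin c) ℝ)
    (X : Matrix (Fin a) (Fin b) ℝ) (Y : Matrix (Fin a) (Fin c) ℝ)
    (Z : Matrix (Fin b) (Fin c) ℝ)
    (hV : (fromBlocks A (fromCols X Y) (fromRows Xᵀ Yᵀ)
            (fromBlocks B Z Zᵀ C)).PosDef) :
    ((A - Y * C⁻¹ * Yᵀ) -
      (A - fromCols X Y * (fromBlocks B Z Zᵀ C)⁻¹ * (fromCols X Y)ᵀ)).PosSemidef := by
  have hBC : (fromBlocks B Z Zᵀ C).PosDef := hV.submatrix Sum.inr_injective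
  have hC : C.PosDef := hBC.submatrix Sum.inr_injective
  let E : Matrix (Fin b ⊕ Fin c) (Fin c) ℝ := fromRows 0 1
  have hXYE : fromCols X Y * E = Y := by
    simp only [E, fromCols_mul_fromRows, Matrix.mul_zero, Matrix.mul_one, zero_add]
  have hEVE : Eᴴ * fromBlocks B Z Zᵀ C * E = C := by
    simp only [E, conjTranspose_eq_transpose_of_trivial, transpose_fromRows, transpose_zero,
      transpose_one, fromCols_mul_fromBlocks, fromCols_mul_fromRows, Matrix.zero_mul,
      Matrix.one_mul, Matrix.mul_zero, Matrix.mul_one, zero_add]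
  have key := hBC.posSemidef_mul_inv_mul_sub_compression (hEVE ▸ hC) (fromCols X Y)
  rw [hXYE, hEVE] at key
  simpa only [sub_sub_sub_cancel_left, conjTranspose_eq_transpose_of_trivial] using key
end

section
/- Let V_AB = [[V_A, X], [Xᵀ, V_B]] be real symmetric positive definite (diagonal blocks of sizes a and b), and let γ = [[γ_B, δ], [δᵀ, γ_B']] be real symmetric positive definite (diagonal blocks of sizes b and b'). Define the classical Gaussian map Γ on the B system by Γ(V_B) := γ_B' − δᵀ (γ_B + V_B)^{-1} δ, and define Γ(V_AB) as the Schur complement eliminating the middle block of the symmetric matrix W := [[V_A, X, 0], [Xᵀ, V_B + γ_B, δ], [0, δᵀ, γ_B']], i.e. Γ(V_AB) = [[V_A − X(V_B+γ_B)^{-1}Xᵀ, −X(V_B+γ_B)^{-1}δ], [−δᵀ(V_B+γ_B)^{-1}Xᵀ, Γ(V_B)]], a symmetric positive definite matrix on A⊕B' whose B'-reduction is Γ(V_B). Then Γ(V_AB) / Γ(V_B) ≥ V_AB / V_B in the Loewner order. -/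
/-!
Put `S = V_B + γ_B` and let `K = γ_B − δ γ_B'⁻¹ δᵀ ≥ 0` be the Schur complement of `γ`. Comparing
the two block-inverse formulas for `[[S, δ], [δᵀ, γ_B']]` gives
`(V_B + K)⁻¹ = S⁻¹ + S⁻¹ δ Γ(V_B)⁻¹ δᵀ S⁻¹`, and with it the difference of the two Schur complements
collapses to `X (V_B⁻¹ − (V_B + K)⁻¹) Xᵀ`. This is positive semidefinite because matrix inversion
is antitone on positive definite matrices.
-/

open Matrix

namespace Matrix

variable {n : Type*} [Fintype n] [DecidableEq n]

theorem inv_sub_mul_inv_mul_eq {m α : Type*} [Fintype m] [DecidableEq m] [Field α]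
    {A : Matrix m m α} {B : Matrix m n α} {C : Matrix n m α} {D : Matrix n n α}
    (hA : IsUnit A) (hD : IsUnit D) (hS : IsUnit (A - B * D⁻¹ * C)) :
    (A - B * D⁻¹ * C)⁻¹ = A⁻¹ + A⁻¹ * B * (D - C * A⁻¹ * B)⁻¹ * C * A⁻¹ := by
  let := hA.invertible
  let := hD.invertible
  let : Invertible (A - B * ⅟D * C) := by rw [invOf_eq_nonsing_inv]; exact hS.invertible
  let := fromBlocks₂₂Invertible A B C D
  let := invertibleOfFromBlocks₁₁Invertible A B C D
  -- both block formulas compute the same inverse; compare their top-left blocks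
  have h := congrArg toBlocks₁₁ ((invOf_fromBlocks₂₂_eq A B C D).symm.trans
    (invOf_fromBlocks₁₁_eq A B C D))
  simpa only [toBlocks_fromBlocks₁₁, invOf_eq_nonsing_inv] using h

theorem PosDef.inv_sub_inv_posSemidef {K : Type*} [Field K] [PartialOrder K] [StarRing K]
    [StarOrderedRing K] {A B : Matrix n n K} (hA : A.PosDef) (hBA : (B - A).PosSemidef) :
    (A⁻¹ - B⁻¹).PosSemidef := by
  have hB : B.PosDef := by simpa using hA.add_posSemidef hBA
  let := hA.isUnit.invertible
  let := hB.isUnit.invertible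
  let := hA.inv.isUnit.invertible
  -- both sides are Schur complements of the same block matrix `[[B, 1], [1, A⁻¹]]`
  have hB₁₁ := PosDef.fromBlocks₁₁ (1 : Matrix n n K) A⁻¹ hB
  have hA₂₂ := PosDef.fromBlocks₂₂ B (1 : Matrix n n K) hA.inv
  rw [conjTranspose_one, Matrix.one_mul, Matrix.mul_one] at hB₁₁ hA₂₂
  rw [inv_inv_of_invertible] at hA₂₂
  exact hB₁₁.mp (hA₂₂.mpr hBA)

end Matrix

/-- **Classical Gaussian maps on the conditioning system increase the Schur complement.**
Given a positive definite bipartite `V_AB = [[V_A, X], [Xᵀ, V_B]]` and a positive definite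
`γ = [[γ_B, δ], [δᵀ, γ_B']]`, the classical Gaussian map `Γ(V_B) = γ_B' − δᵀ(γ_B+V_B)⁻¹δ`
acting on the `B` system satisfies `Γ(V_AB) / Γ(V_B) ≥ V_AB / V_B` in the Loewner order,
where `Γ(V_AB)` is the block matrix
`[[V_A − X(V_B+γ_B)⁻¹Xᵀ, −X(V_B+γ_B)⁻¹δ], [−δᵀ(V_B+γ_B)⁻¹Xᵀ, Γ(V_B)]]`. -/
theorem gaussian_map_increases_schur_complement (a b b' : ℕ)
    (VA : Matrix (Fin a) (Fin a) ℝ) (VB : Matrix (Fin b) (Fin b) ℝ)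
    (X : Matrix (Fin a) (Fin b) ℝ)
    (γB : Matrix (Fin b) (Fin b) ℝ) (γB' : Matrix (Fin b') (Fin b') ℝ)
    (δ : Matrix (Fin b) (Fin b') ℝ)
    (hV : (fromBlocks VA X Xᵀ VB).PosDef)
    (hγ : (fromBlocks γB δ δᵀ γB').PosDef) :
    (((VA - X * (VB + γB)⁻¹ * Xᵀ) -
        (-(X * (VB + γB)⁻¹ * δ)) * (γB' - δᵀ * (γB + VB)⁻¹ * δ)⁻¹ *
          (-(δᵀ * (VB + γB)⁻¹ * Xᵀ)))
      - (VA - X * VB⁻¹ * Xᵀ)).PosSemidef := by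
  have hVB : VB.PosDef := hV.submatrix Sum.inr_injective
  have hγB : γB.PosDef := hγ.submatrix Sum.inl_injective
  have hγB' : γB'.PosDef := hγ.submatrix Sum.inr_injective
  let := hγB'.isUnit.invertible
  set K := γB - δ * γB'⁻¹ * δᵀ
  have hK : K.PosSemidef := by
    simpa only [conjTranspose_eq_transpose_of_trivial] using
      (PosDef.fromBlocks₂₂ γB δ hγB').mp hγ.posSemidef
  have hS : VB + γB - δ * γB'⁻¹ * δᵀ = VB + K := add_sub_assoc VB γB _
  have hinv := inv_sub_mul_inv_mul_eq (hVB.add_posSemidef hγB.posSemidef).isUnit hγB'.isUnit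
    (hS ▸ (hVB.add_posSemidef hK).isUnit)
  have hanti : (VB⁻¹ - (VB + K)⁻¹).PosSemidef :=
    hVB.inv_sub_inv_posSemidef (by rwa [add_sub_cancel_left])
  have hconj := hanti.mul_mul_conjTranspose_same X
  rw [conjTranspose_eq_transpose_of_trivial] at hconj
  rw [add_comm γB VB]
  refine (congrArg PosSemidef ?_).mpr hconj
  rw [← hS, hinv]
  simp only [Matrix.mul_sub, Matrix.sub_mul, Matrix.mul_add, Matrix.add_mul, Matrix.neg_mul,
    Matrix.mul_neg, neg_neg, Matrix.mul_assoc]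
  abel
end

section
/- Let V_ABC be a tripartite quantum covariance matrix, i.e. a real symmetric matrix with diagonal blocks of sizes 2n_A, 2n_B, 2n_C such that the complex Hermitian matrix V_ABC + iΩ_ABC is positive semidefinite, where Ω_ABC = Ω_A ⊕ Ω_B ⊕ Ω_C is the standard symplectic form (such a V_ABC and all its reductions are automatically positive definite, so the Schur complements below exist). Then the monogamy inequality V_AC / V_A ≥ Ω_Cᵀ (V_BC / V_B)^{-1} Ω_C holds in the Loewner order. -/
open Matrix ComplexOrder

/-- The standard symplectic form on `k` modes: the `2k × 2k` block-diagonal matrix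
`⊕_{i=1}^k [[0, 1], [−1, 0]]`. -/
noncomputable def Omega (k : ℕ) : Matrix (Fin 2 × Fin k) (Fin 2 × Fin k) ℝ :=
  Matrix.blockDiagonal fun _ : Fin k => !![(0 : ℝ), 1; -1, 0]

/-- `V` is a quantum covariance matrix with respect to the symplectic form `Ω`:
the complex Hermitian matrix `V + iΩ` is positive semidefinite. -/
def IsQCM {ι : Type} [Fintype ι] [DecidableEq ι] (Ω V : Matrix ι ι ℝ) : Prop :=
  (V.map (fun x => (x : ℂ)) + Complex.I • Ω.map (fun x => (x : ℂ))).PosSemidef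

/-!
Testing `V + iΩ ≥ 0` on `r + i s` gives `2 rᵀΩs ≤ rᵀVr + sᵀVs` for all real `r`, `s`; since `Ω`
is invertible this already forces `V > 0`, so all the Schur complements exist. Take `r`
supported on `BC` and `s` on `AC`: the cross term only sees `Ω_C`, and minimising over the
`B`- and `A`-components turns the two quadratic forms into those of `N = V_BC / V_B` and
`M = V_AC / V_A`, so `2 vᵀΩ_Cᵀu ≤ vᵀMv + uᵀNu` for all `u`, `v`. Minimising over `u`
(at `u = N⁻¹Ω_C v`) gives `M ≥ Ω_Cᵀ N⁻¹ Ω_C`.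
-/

theorem Omega_transpose (k : ℕ) : (Omega k)ᵀ = -Omega k := by
  rw [Omega, blockDiagonal_transpose, ← blockDiagonal_neg]
  congr 1; ext : 1; simp [← Matrix.ext_iff, Fin.forall_fin_two]

theorem Omega_mul_self (k : ℕ) : Omega k * Omega k = -1 := by
  rw [Omega, ← blockDiagonal_mul, ← blockDiagonal_one, ← blockDiagonal_neg]
  congr 1; ext : 1; simp [← Matrix.ext_iff, Fin.forall_fin_two]

theorem eq_zero_of_forall_mul_le {c d : ℝ} (h : ∀ t : ℝ, t * c ≤ d) : c = 0 := by
  by_contra hne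
  have := h ((|d| + 1) / c)
  rw [div_mul_cancel₀ _ hne] at this
  linarith [le_abs_self d]

namespace Matrix

variable {m n : Type*} [Fintype m] [Fintype n]

theorem dotProduct_mulVec_swap_of_transpose_eq_neg {Ω : Matrix n n ℝ} (hΩ : Ωᵀ = -Ω)
    (r s : n → ℝ) : s ⬝ᵥ Ω *ᵥ r = -(r ⬝ᵥ Ω *ᵥ s) := by
  rw [dotProduct_mulVec, ← dotProduct_neg, ← neg_mulVec, ← hΩ, mulVec_transpose, dotProduct_comm]

theorem dotProduct_fromBlocks_mulVec_schur [DecidableEq m] {A : Matrix m m ℝ} (hA : A.PosDef)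
    (B : Matrix m n ℝ) (D : Matrix n n ℝ) (y : n → ℝ) :
    (-((A⁻¹ * B) *ᵥ y) ⊕ᵥ y) ⬝ᵥ fromBlocks A B Bᵀ D *ᵥ (-((A⁻¹ * B) *ᵥ y) ⊕ᵥ y)
      = y ⬝ᵥ (D - Bᵀ * A⁻¹ * B) *ᵥ y := by
  have := hA.isUnit.invertible
  have := schur_complement_eq₁₁ B D (-((A⁻¹ * B) *ᵥ y)) y hA.1
  simp only [star_trivial, conjTranspose_eq_transpose_of_trivial, neg_add_cancel, zero_vecMul,
    zero_dotProduct, zero_add] at this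
  rwa [dotProduct_mulVec, dotProduct_mulVec]

theorem PosDef.schur_complement₁₁ [DecidableEq m] {A : Matrix m m ℝ} {B : Matrix m n ℝ}
    {D : Matrix n n ℝ} (h : (fromBlocks A B Bᵀ D).PosDef) : (D - Bᵀ * A⁻¹ * B).PosDef := by
  have hA : A.PosDef := h.submatrix Sum.inl_injective
  have hS : (D - Bᵀ * A⁻¹ * B).IsHermitian := by
    have := (IsHermitian.fromBlocks₁₁ B D hA.1).1
    simpa [conjTranspose_eq_transpose_of_trivial] using this h.1
  refine .of_dotProduct_mulVec_pos hS fun y hy => ?_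
  rw [star_trivial, ← dotProduct_fromBlocks_mulVec_schur hA]
  simpa using h.dotProduct_mulVec_pos (x := -((A⁻¹ * B) *ᵥ y) ⊕ᵥ y)
    (by simp [← Sum.elim_zero_zero, Sum.elim_eq_iff, hy])

theorem posSemidef_sub_mul_inv_mul_transpose_of_two_mul_le [DecidableEq n] {M : Matrix m m ℝ}
    {N : Matrix n n ℝ} (B : Matrix m n ℝ) (hM : M.IsHermitian) (hN : N.PosDef)
    (h : ∀ v u, 2 * (v ⬝ᵥ B *ᵥ u) ≤ v ⬝ᵥ M *ᵥ v + u ⬝ᵥ N *ᵥ u) :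
    (M - B * N⁻¹ * Bᵀ).PosSemidef := by
  have hBNB : (B * N⁻¹ * Bᵀ).IsHermitian := by
    simpa [conjTranspose_eq_transpose_of_trivial] using isHermitian_mul_mul_conjTranspose B hN.1.inv
  refine .of_dotProduct_mulVec_nonneg (hM.sub hBNB) fun v => ?_
  set w := Bᵀ *ᵥ v
  -- the minimising choice of `u` in `h v u`
  set u := N⁻¹ *ᵥ w
  have hBu : v ⬝ᵥ B *ᵥ u = w ⬝ᵥ u := by rw [dotProduct_mulVec, ← mulVec_transpose]
  have hNu : u ⬝ᵥ N *ᵥ u = w ⬝ᵥ u := by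
    rw [mulVec_mulVec, mul_nonsing_inv _ hN.det_pos.ne'.isUnit, one_mulVec, dotProduct_comm]
  have hBNBv : v ⬝ᵥ (B * N⁻¹ * Bᵀ) *ᵥ v = w ⬝ᵥ u := by rw [← mulVec_mulVec, ← mulVec_mulVec, hBu]
  rw [star_trivial, sub_mulVec, dotProduct_sub, hBNBv]
  linarith [h v u]

end Matrix

section QCM

variable {ι : Type} [Fintype ι] [DecidableEq ι] {Ω V : Matrix ι ι ℝ}

theorem IsQCM.sub_le (h : IsQCM Ω V) (r s : ι → ℝ) :
    r ⬝ᵥ Ω *ᵥ s - s ⬝ᵥ Ω *ᵥ r ≤ r ⬝ᵥ V *ᵥ r + s ⬝ᵥ V *ᵥ s := by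
  have hre : (star (fun i => ⟨r i, s i⟩ : ι → ℂ) ⬝ᵥ
      (V.map (fun x => (x : ℂ)) + Complex.I • Ω.map (fun x => (x : ℂ))) *ᵥ fun i => ⟨r i, s i⟩).re
      = r ⬝ᵥ V *ᵥ r + s ⬝ᵥ V *ᵥ s - (r ⬝ᵥ Ω *ᵥ s - s ⬝ᵥ Ω *ᵥ r) := by
    simp only [dotProduct, mulVec, Complex.re_sum, Finset.mul_sum, ← Finset.sum_add_distrib,
      ← Finset.sum_sub_distrib]
    refine Finset.sum_congr rfl fun i _ => Finset.sum_congr rfl fun j _ => ?_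
    simp only [Pi.star_apply, RCLike.star_def, Matrix.add_apply, map_apply, Matrix.smul_apply,
      smul_eq_mul, Complex.mul_re, Complex.conj_re, Complex.add_re, Complex.ofReal_re,
      Complex.I_re, Complex.I_im, Complex.ofReal_im, Complex.add_im, Complex.mul_im,
      Complex.conj_im]
    ring
  have := (h.dotProduct_mulVec_nonneg fun i => ⟨r i, s i⟩).1
  rw [Complex.zero_re, hre] at this
  linarith

theorem IsQCM.two_mul_le (h : IsQCM Ω V) (hΩ : Ωᵀ = -Ω) (r s : ι → ℝ) :
    2 * (r ⬝ᵥ Ω *ᵥ s) ≤ r ⬝ᵥ V *ᵥ r + s ⬝ᵥ V *ᵥ s := by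
  have := h.sub_le r s
  rw [dotProduct_mulVec_swap_of_transpose_eq_neg hΩ r s] at this
  linarith

theorem IsQCM.posDef (h : IsQCM Ω V) (hV : V.IsSymm) (hΩ : Ωᵀ = -Ω) (hΩu : IsUnit Ω) :
    V.PosDef := by
  refine .of_dotProduct_mulVec_pos (isHermitian_iff_isSymm.2 hV) fun x hx => ?_
  rw [star_trivial]
  by_contra! hxV
  set w := x ᵥ* Ω
  -- testing on `(t • x, w)`, the left side grows linearly in `t` and the right side stays bounded
  have hlin : ∀ t : ℝ, t * (2 * (w ⬝ᵥ w)) ≤ w ⬝ᵥ V *ᵥ w := fun t => by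
    have := h.two_mul_le hΩ (t • x) w
    rw [smul_dotProduct, dotProduct_mulVec x Ω w, mulVec_smul, smul_dotProduct, dotProduct_smul,
      smul_eq_mul, smul_eq_mul, smul_eq_mul] at this
    nlinarith [mul_nonneg (mul_self_nonneg t) (neg_nonneg.2 hxV)]
  have hw := eq_zero_of_forall_mul_le hlin
  have hw0 : w = 0 := dotProduct_self_eq_zero.1 (by linarith)
  exact hx (vecMul_injective_iff_isUnit.2 hΩu (hw0.trans (zero_vecMul Ω).symm))

end QCM

/-- **Monogamy of the Schur complement for quantum covariance matrices.**
If `V_ABC` is a tripartite quantum covariance matrix, then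
`V_AC / V_A ≥ Ω_Cᵀ (V_BC / V_B)⁻¹ Ω_C` in the Loewner order. -/
theorem schur_complement_monogamy (nA nB nC : ℕ)
    (VA : Matrix (Fin 2 × Fin nA) (Fin 2 × Fin nA) ℝ)
    (VB : Matrix (Fin 2 × Fin nB) (Fin 2 × Fin nB) ℝ)
    (VC : Matrix (Fin 2 × Fin nC) (Fin 2 × Fin nC) ℝ)
    (X : Matrix (Fin 2 × Fin nA) (Fin 2 × Fin nB) ℝ)
    (Y : Matrix (Fin 2 × Fin nA) (Fin 2 × Fin nC) ℝ)
    (Z : Matrix (Fin 2 × Fin nB) (Fin 2 × Fin nC) ℝ)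
    (hSym : (fromBlocks VA (fromCols X Y) (fromRows Xᵀ Yᵀ)
              (fromBlocks VB Z Zᵀ VC)).IsSymm)
    (hQCM : IsQCM
      (fromBlocks (Omega nA) 0 0 (fromBlocks (Omega nB) 0 0 (Omega nC)))
      (fromBlocks VA (fromCols X Y) (fromRows Xᵀ Yᵀ) (fromBlocks VB Z Zᵀ VC))) :
    ((VC - Yᵀ * VA⁻¹ * Y) - (Omega nC)ᵀ * (VC - Zᵀ * VB⁻¹ * Z)⁻¹ * Omega nC).PosSemidef := by
  set Ω := fromBlocks (Omega nA) 0 0 (fromBlocks (Omega nB) 0 0 (Omega nC))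
  have hΩ : Ωᵀ = -Ω := by simp [Ω, fromBlocks_transpose, Omega_transpose, fromBlocks_neg]
  have hΩu : IsUnit Ω := (isUnit_iff_isUnit_det Ω).2 <| isUnit_det_of_right_inverse (B := -Ω) <| by
    simp [Ω, fromBlocks_multiply, Omega_mul_self, ← fromBlocks_one, fromBlocks_neg]
  have hW := hQCM.posDef hSym hΩ hΩu
  have hBC : (fromBlocks VB Z Zᵀ VC).PosDef := hW.submatrix Sum.inr_injective
  have hAC : (fromBlocks VA Y Yᵀ VC).PosDef := by
    convert hW.submatrix (Sum.map_injective.2 ⟨Function.injective_id, Sum.inr_injective⟩) using 1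
    ext (i | i) (j | j) <;> rfl
  have hVA : VA.PosDef := hAC.submatrix Sum.inl_injective
  have hVB : VB.PosDef := hBC.submatrix Sum.inl_injective
  have hineq : ∀ v u, 2 * (v ⬝ᵥ (Omega nC)ᵀ *ᵥ u) ≤
      v ⬝ᵥ (VC - Yᵀ * VA⁻¹ * Y) *ᵥ v + u ⬝ᵥ (VC - Zᵀ * VB⁻¹ * Z) *ᵥ u := by
    intro v u
    have := hQCM.two_mul_le hΩ (0 ⊕ᵥ (-((VB⁻¹ * Z) *ᵥ u) ⊕ᵥ u)) (-((VA⁻¹ * Y) *ᵥ v) ⊕ᵥ (0 ⊕ᵥ v))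
    rw [← dotProduct_fromBlocks_mulVec_schur hVA, ← dotProduct_fromBlocks_mulVec_schur hVB,
      dotProduct_mulVec, ← mulVec_transpose, transpose_transpose, dotProduct_comm]
    simp only [Ω, fromBlocks_mulVec, Sum.elim_comp_inl, Sum.elim_comp_inr, zero_mulVec, add_zero,
      mulVec_zero, zero_add, sumElim_dotProduct_sumElim, zero_dotProduct, dotProduct_zero,
      fromCols_mulVec, dotProduct_add, neg_dotProduct, fromRows_mulVec] at this ⊢
    linarith
  simpa using posSemidef_sub_mul_inv_mul_transpose_of_two_mul_le _ hAC.schur_complement₁₁.1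
    hBC.schur_complement₁₁ hineq
end

section
/- For every real symmetric positive definite tripartite covariance matrix V_ABC, the log-det conditional mutual information equals the log-det mutual information of the Schur complement with respect to C: I_M(A:B|C)_V = I_M(A:B)_{V_ABC/V_C}. Here V_ABC/V_C is the positive definite bipartite matrix on A⊕B obtained by eliminating the C block, whose A- and B-reductions are (V_ABC/V_C)_A = V_AC/V_C and (V_ABC/V_C)_B = V_BC/V_C. -/
/-!
Eliminating the `C` block by the Schur determinant formula
`det [[P, Q], [R, C]] = det C · det (P - Q C⁻¹ R)` turns each of `det V_AC`, `det V_BC` and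
`det V_ABC` into `det C` times the determinant of the corresponding block of `V_ABC / V_C`.
The two factors `det C` in the numerator cancel the two in the denominator, and `det C ≠ 0`
because `V_C`, a principal submatrix of the positive definite `V_ABC`, is positive definite.
-/

open Matrix

namespace Matrix

variable {m n R : Type*}

theorem posDef_of_posDef_fromBlocks₂₂ [Ring R] [PartialOrder R] [StarRing R]
    {A : Matrix m m R} {B : Matrix m n R} {C : Matrix n m R} {D : Matrix n n R}
    (h : (fromBlocks A B C D).PosDef) : D.PosDef :=
  h.submatrix Sum.inr_injective

theorem det_fromBlocks_of_isUnit_det₂₂ [Fintype m] [Fintype n] [DecidableEq m] [DecidableEq n]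
    [CommRing R]
    (A : Matrix m m R) (B : Matrix m n R) (C : Matrix n m R) {D : Matrix n n R}
    (hD : IsUnit D.det) :
    (fromBlocks A B C D).det = D.det * (A - B * D⁻¹ * C).det := by
  have := D.invertibleOfIsUnitDet hD
  rw [det_fromBlocks₂₂, invOf_eq_nonsing_inv]

end Matrix

/-- **I_M(A:B|C) = I_M(A:B) of the Schur complement with respect to C.**
For a real symmetric positive definite tripartite covariance matrix
`V_ABC = [[A, X, Y], [Xᵀ, B, Z], [Yᵀ, Zᵀ, C]]`, the log-det conditional mutual
information equals the log-det mutual information of `V_ABC / V_C`, whose `A`- and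
`B`-reductions are `A − Y C⁻¹ Yᵀ` and `B − Z C⁻¹ Zᵀ`. -/
theorem logdet_cmi_eq_mi_schur (a b c : ℕ)
    (A : Matrix (Fin a) (Fin a) ℝ) (B : Matrix (Fin b) (Fin b) ℝ)
    (C : Matrix (Fin c) (Fin c) ℝ)
    (X : Matrix (Fin a) (Fin b) ℝ) (Y : Matrix (Fin a) (Fin c) ℝ)
    (Z : Matrix (Fin b) (Fin c) ℝ)
    (hV : (fromBlocks (fromBlocks A X Xᵀ B) (fromRows Y Z) (fromCols Yᵀ Zᵀ)
            C).PosDef) :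
    (1 / 2 : ℝ) * Real.log
        (((fromBlocks A Y Yᵀ C).det * (fromBlocks B Z Zᵀ C).det) /
          (C.det *
            (fromBlocks (fromBlocks A X Xᵀ B) (fromRows Y Z) (fromCols Yᵀ Zᵀ) C).det))
      = (1 / 2 : ℝ) * Real.log
          (((A - Y * C⁻¹ * Yᵀ).det * (B - Z * C⁻¹ * Zᵀ).det) /
            (fromBlocks A X Xᵀ B - fromRows Y Z * C⁻¹ * fromCols Yᵀ Zᵀ).det) := by
  have hC : C.det ≠ 0 := (posDef_of_posDef_fromBlocks₂₂ hV).det_pos.ne'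
  have hCu : IsUnit C.det := hC.isUnit
  rw [det_fromBlocks_of_isUnit_det₂₂ A Y Yᵀ hCu, det_fromBlocks_of_isUnit_det₂₂ B Z Zᵀ hCu,
    det_fromBlocks_of_isUnit_det₂₂ _ _ _ hCu, mul_mul_mul_comm, ← mul_assoc C.det C.det,
    mul_div_mul_left _ _ (mul_ne_zero hC hC)]
end

section
/- For every real symmetric positive definite tripartite covariance matrix V_ABC, the log-det conditional mutual information equals the log-det mutual information of the inverse matrix: ½ ln(det V_AC · det V_BC / (det V_C · det V_ABC)) = ½ ln(det (V^{-1})_A · det (V^{-1})_B / det (V^{-1})_AB), where (V^{-1})_A, (V^{-1})_B and (V^{-1})_AB denote the principal submatrices of V_ABC^{-1} corresponding to the systems A, B and AB respectively. -/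
/-!
Jacobi's complementary-minor identity `det W · det (W⁻¹)_I = det W_{Iᶜ}` turns each of the three
principal minors of `V⁻¹` on the right-hand side into a complementary minor of `V` divided by
`det V`: `(V⁻¹)_A ↦ V_BC`, `(V⁻¹)_B ↦ V_AC`, `(V⁻¹)_AB ↦ V_C`. The factors of `det V` then cancel.
The identity itself follows by taking determinants in
`W · [[(W⁻¹)₁₁, 0], [(W⁻¹)₂₁, 1]] = [[1, W₁₂], [0, W₂₂]]`.
-/

open Matrix

namespace Matrix

variable {R : Type*} [CommRing R] {ι m n : Type*} [Fintype ι] [Fintype m] [Fintype n]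
  [DecidableEq ι] [DecidableEq m] [DecidableEq n]

theorem det_mul_det_toBlocks₁₁_inv (W : Matrix (m ⊕ n) (m ⊕ n) R) (hW : IsUnit W.det) :
    W.det * (W⁻¹).toBlocks₁₁.det = W.toBlocks₂₂.det := by
  obtain ⟨P, Q, S, T, rfl⟩ : ∃ P Q S T, W = fromBlocks P Q S T :=
    ⟨_, _, _, _, (fromBlocks_toBlocks W).symm⟩
  obtain ⟨E, F, G, H, hinv⟩ : ∃ E F G H, (fromBlocks P Q S T)⁻¹ = fromBlocks E F G H :=
    ⟨_, _, _, _, (fromBlocks_toBlocks _).symm⟩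
  have hmul := mul_nonsing_inv _ hW
  rw [hinv, fromBlocks_multiply, ← fromBlocks_one, fromBlocks_inj] at hmul
  obtain ⟨h₁₁, -, h₂₁, -⟩ := hmul
  have hblock : fromBlocks P Q S T * fromBlocks E 0 G 1 = fromBlocks 1 Q 0 T := by
    simp only [fromBlocks_multiply, h₁₁, h₂₁, Matrix.mul_zero, Matrix.mul_one, zero_add]
  have hdet := congrArg det hblock
  rw [det_mul, det_fromBlocks_zero₁₂, det_fromBlocks_zero₂₁, det_one, det_one, mul_one,
    one_mul] at hdet
  rwa [hinv, toBlocks_fromBlocks₁₁, toBlocks_fromBlocks₂₂]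

theorem det_mul_det_submatrix_inv_eq_det_submatrix_compl (W : Matrix ι ι R) (hW : IsUnit W.det)
    (e : m ⊕ n ≃ ι) :
    W.det * ((W⁻¹).submatrix (e ∘ Sum.inl) (e ∘ Sum.inl)).det =
      (W.submatrix (e ∘ Sum.inr) (e ∘ Sum.inr)).det := by
  have h := det_mul_det_toBlocks₁₁_inv (W.submatrix e e)
    (by rwa [det_submatrix_equiv_self])
  rwa [det_submatrix_equiv_self, inv_submatrix_equiv] at h

end Matrix

/-- **I_M(A:B|C) = I_M(A:B) of the inverse matrix.** For a real symmetric positive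
definite tripartite covariance matrix `V = [[A, X, Y], [Xᵀ, B, Z], [Yᵀ, Zᵀ, C]]`,
`½ ln(det V_AC · det V_BC / (det V_C · det V)) =
 ½ ln(det (V⁻¹)_A · det (V⁻¹)_B / det (V⁻¹)_AB)`,
where `(V⁻¹)_A`, `(V⁻¹)_B`, `(V⁻¹)_AB` are the principal submatrices of `V⁻¹` on the
indicated subsystems. -/
theorem logdet_cmi_eq_mi_inverse (a b c : ℕ)
    (A : Matrix (Fin a) (Fin a) ℝ) (B : Matrix (Fin b) (Fin b) ℝ)
    (C : Matrix (Fin c) (Fin c) ℝ)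
    (X : Matrix (Fin a) (Fin b) ℝ) (Y : Matrix (Fin a) (Fin c) ℝ)
    (Z : Matrix (Fin b) (Fin c) ℝ)
    (hV : (fromBlocks (fromBlocks A X Xᵀ B) (fromRows Y Z) (fromCols Yᵀ Zᵀ)
            C).PosDef) :
    (1 / 2 : ℝ) * Real.log
        (((fromBlocks A Y Yᵀ C).det * (fromBlocks B Z Zᵀ C).det) /
          (C.det *
            (fromBlocks (fromBlocks A X Xᵀ B) (fromRows Y Z) (fromCols Yᵀ Zᵀ) C).det))
      = (1 / 2 : ℝ) * Real.log
          ((((fromBlocks (fromBlocks A X Xᵀ B) (fromRows Y Z) (fromCols Yᵀ Zᵀ) C)⁻¹).submatrix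
                (Sum.inl ∘ Sum.inl : Fin a → (Fin a ⊕ Fin b) ⊕ Fin c)
                (Sum.inl ∘ Sum.inl)).det *
              (((fromBlocks (fromBlocks A X Xᵀ B) (fromRows Y Z) (fromCols Yᵀ Zᵀ) C)⁻¹).submatrix
                (Sum.inl ∘ Sum.inr : Fin b → (Fin a ⊕ Fin b) ⊕ Fin c)
                (Sum.inl ∘ Sum.inr)).det /
            (((fromBlocks (fromBlocks A X Xᵀ B) (fromRows Y Z) (fromCols Yᵀ Zᵀ) C)⁻¹).submatrix
                (Sum.inl : Fin a ⊕ Fin b → (Fin a ⊕ Fin b) ⊕ Fin c) Sum.inl).det) := by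
  set V := fromBlocks (fromBlocks A X Xᵀ B) (fromRows Y Z) (fromCols Yᵀ Zᵀ) C
  have hV₀ : V.det ≠ 0 := hV.det_pos.ne'
  have hA : V.det * ((V⁻¹).submatrix (Sum.inl ∘ Sum.inl) (Sum.inl ∘ Sum.inl)).det =
      (fromBlocks B Z Zᵀ C).det :=
    (det_mul_det_submatrix_inv_eq_det_submatrix_compl V hV₀.isUnit
      (Equiv.sumAssoc (Fin a) (Fin b) (Fin c)).symm).trans
      (congrArg det (by ext (i | i) (j | j) <;> rfl))
  have hB : V.det * ((V⁻¹).submatrix (Sum.inl ∘ Sum.inr) (Sum.inl ∘ Sum.inr)).det =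
      (fromBlocks A Y Yᵀ C).det :=
    (det_mul_det_submatrix_inv_eq_det_submatrix_compl V hV₀.isUnit
      ((Equiv.sumAssoc (Fin b) (Fin a) (Fin c)).symm.trans
        ((Equiv.sumComm (Fin b) (Fin a)).sumCongr (Equiv.refl (Fin c))))).trans
      (congrArg det (by ext (i | i) (j | j) <;> rfl))
  have hAB : V.det * ((V⁻¹).submatrix Sum.inl Sum.inl).det = C.det :=
    det_mul_det_submatrix_inv_eq_det_submatrix_compl V hV₀.isUnit (Equiv.refl _)
  rw [← hA, ← hB, ← hAB, show ∀ α β γ v : ℝ,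
      v * β * (v * α) / (v * γ * v) = v * v * (α * β) / (v * v * γ) by intros; ring,
    mul_div_mul_left _ _ (mul_ne_zero hV₀ hV₀)]
end

section
/- Let V and W be real symmetric positive definite matrices with the same bipartite block partition into systems A and B, and let t ∈ [0,1]. Then the log-det mutual information is convex along the geodesic of the trace metric: I_M(A:B)_{V #_t W} ≤ (1−t)·I_M(A:B)_V + t·I_M(A:B)_W, where V #_t W := V^{1/2} (V^{-1/2} W V^{-1/2})^t V^{1/2} is the weighted geometric mean (a positive definite matrix with the same block partition). -/
open Matrix

/-- Real power of a Hermitian (real symmetric) matrix via the spectral decomposition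
(junk value `0` on non-Hermitian matrices). -/
noncomputable def rpowMat {ι : Type} [Fintype ι] [DecidableEq ι]
    (M : Matrix ι ι ℝ) (t : ℝ) : Matrix ι ι ℝ :=
  if h : M.IsHermitian then
    (h.eigenvectorUnitary : Matrix ι ι ℝ) *
      Matrix.diagonal (fun i => h.eigenvalues i ^ t) *
      star (h.eigenvectorUnitary : Matrix ι ι ℝ)
  else 0

/-- The weighted geometric mean `M #_t N := M^{1/2} (M^{-1/2} N M^{-1/2})^t M^{1/2}`. -/
noncomputable def wGeomMean {ι : Type} [Fintype ι] [DecidableEq ι]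
    (M N : Matrix ι ι ℝ) (t : ℝ) : Matrix ι ι ℝ :=
  rpowMat M (1 / 2) *
    rpowMat (rpowMat M (-(1 / 2)) * N * rpowMat M (-(1 / 2))) t *
    rpowMat M (1 / 2)

/-- Log-det mutual information `I_M(A:B)_V = ½ ln(det V_A · det V_B / det V)` of a
bipartite matrix. -/
noncomputable def IM {a b : ℕ} (V : Matrix (Fin a ⊕ Fin b) (Fin a ⊕ Fin b) ℝ) : ℝ :=
  (1 / 2 : ℝ) * Real.log ((V.toBlocks₁₁.det * V.toBlocks₂₂.det) / V.det)

/-! Write `V^{-1/2} W V^{-1/2} = U diag(μ) Uᵀ` and `S = V^{1/2} U`. Then the whole geodesic is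
`V #_s W = S diag(μ^s) Sᵀ`, passing through `V` at `s = 0` and `W` at `s = 1`. Along it
`log det (V #_s W)` is affine in `s`, while the log-determinant of each diagonal block,
`log det (R diag(μ^s) Rᵀ)` with `R` the corresponding rows of `S`, is convex: it is continuous
and midpoint convex, and the midpoint inequality is the Cauchy–Schwarz inequality
`det (M Nᵀ)² ≤ det (M Mᵀ) det (N Nᵀ)` for Gram determinants. That inequality comes from the
positive semidefinite Schur complement of the Gram matrix `[[M Mᵀ, M Nᵀ], [N Mᵀ, N Nᵀ]]`
together with monotonicity of the determinant. Hence
`I_M = (log det V_A + log det V_B - log det V) / 2` is convex along the geodesic. -/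

open Set

theorem nonpos_of_midpoint_le {g : ℝ → ℝ} (hg : Continuous g)
    (hmid : ∀ x y, g ((x + y) / 2) ≤ (g x + g y) / 2) (h0 : g 0 ≤ 0) (h1 : g 1 ≤ 0)
    {t : ℝ} (ht : t ∈ Icc (0 : ℝ) 1) : g t ≤ 0 := by
  by_contra! hpos
  obtain ⟨x₀, hx₀, hmax⟩ :=
    isCompact_Icc.exists_isMaxOn (nonempty_Icc.mpr zero_le_one) hg.continuousOn
  have hm : 0 < g x₀ := hpos.trans_le (hmax ht)
  -- `c` is the leftmost point of `[0, 1]` where `g` attains its positive maximum; it lies in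
  -- `(0, 1)`, and midpoint convexity at `c` forces `g (c - h) = g c`, contradicting minimality
  set K := Icc (0 : ℝ) 1 ∩ g ⁻¹' {g x₀}
  have hK : IsCompact K := isCompact_Icc.inter_right (isClosed_singleton.preimage hg)
  obtain ⟨⟨hc0, hc1⟩, hgc⟩ : sInf K ∈ K := hK.sInf_mem ⟨x₀, hx₀, rfl⟩
  set c := sInf K
  have hgc' : g c = g x₀ := hgc
  have hc0' : 0 < c := hc0.lt_of_ne fun h => by rw [← h] at hgc'; linarith
  have hc1' : c < 1 := hc1.lt_of_ne fun h => by rw [h] at hgc'; linarith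
  set h := min c (1 - c)
  have hh : 0 < h := lt_min hc0' (by linarith)
  have hleft : c - h ∈ Icc (0 : ℝ) 1 := ⟨by linarith [min_le_left c (1 - c)], by linarith⟩
  have hright : c + h ∈ Icc (0 : ℝ) 1 := ⟨by linarith, by linarith [min_le_right c (1 - c)]⟩
  have hgleft : g (c - h) = g x₀ := by
    have := hmid (c - h) (c + h)
    rw [show (c - h + (c + h)) / 2 = c by ring] at this
    have hl : g (c - h) ≤ g x₀ := hmax hleft
    have hr : g (c + h) ≤ g x₀ := hmax hright
    linarith
  have := csInf_le hK.bddBelow (⟨hleft, hgleft⟩ : c - h ∈ K)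
  linarith

theorem convexOn_univ_of_midpoint_le {f : ℝ → ℝ} (hf : Continuous f)
    (hmid : ∀ x y, f ((x + y) / 2) ≤ (f x + f y) / 2) : ConvexOn ℝ univ f := by
  refine ⟨convex_univ, fun x _ y _ a b ha hb hab => ?_⟩
  set g : ℝ → ℝ := fun τ => f ((1 - τ) * x + τ * y) - ((1 - τ) * f x + τ * f y)
  have hgmid : ∀ s u, g ((s + u) / 2) ≤ (g s + g u) / 2 := by
    intro s u
    have := hmid ((1 - s) * x + s * y) ((1 - u) * x + u * y)
    simp only [g]
    rw [show (1 - (s + u) / 2) * x + (s + u) / 2 * y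
      = ((1 - s) * x + s * y + ((1 - u) * x + u * y)) / 2 by ring]
    linarith
  have := nonpos_of_midpoint_le (g := g) (by fun_prop) hgmid (by simp [g]) (by simp [g])
    (⟨hb, by linarith⟩ : b ∈ Icc (0 : ℝ) 1)
  obtain rfl : a = 1 - b := by linarith
  simp only [g, smul_eq_mul] at this ⊢
  linarith

section RealPower

variable {ι : Type} [Fintype ι] [DecidableEq ι] {M : Matrix ι ι ℝ}

lemma rpowMat_of_isHermitian (hM : M.IsHermitian) (t : ℝ) :
    rpowMat M t = (hM.eigenvectorUnitary : Matrix ι ι ℝ) *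
      diagonal (fun i => hM.eigenvalues i ^ t) * star (hM.eigenvectorUnitary : Matrix ι ι ℝ) :=
  dif_pos hM

lemma rpowMat_posDef (hM : M.PosDef) (t : ℝ) : (rpowMat M t).PosDef := by
  rw [rpowMat_of_isHermitian hM.1, Unitary.isUnit_coe.posDef_star_right_conjugate_iff]
  exact posDef_diagonal_iff.mpr fun i => Real.rpow_pos_of_pos (hM.eigenvalues_pos i) t

lemma rpowMat_mul_rpowMat (hM : M.PosDef) (s t : ℝ) :
    rpowMat M s * rpowMat M t = rpowMat M (s + t) := by
  simp only [rpowMat_of_isHermitian hM.1, Matrix.mul_assoc, ← Matrix.mul_assoc (star _) _,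
    Unitary.coe_star_mul_self, Matrix.one_mul]
  simp only [← Matrix.mul_assoc, diagonal_mul_diagonal, ← Real.rpow_add (hM.eigenvalues_pos _)]

lemma rpowMat_zero (hM : M.IsHermitian) : rpowMat M 0 = 1 := by
  simp [rpowMat_of_isHermitian hM]

lemma rpowMat_one (hM : M.IsHermitian) : rpowMat M 1 = M := by
  conv_rhs => rw [hM.spectral_theorem]
  simp [rpowMat_of_isHermitian hM]

lemma rpowMat_half_mul_rpowMat_half (hM : M.PosDef) :
    rpowMat M (1 / 2) * rpowMat M (1 / 2) = M := by
  rw [rpowMat_mul_rpowMat hM]; norm_num [rpowMat_one hM.1]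

lemma rpowMat_half_mul_rpowMat_neg_half (hM : M.PosDef) :
    rpowMat M (1 / 2) * rpowMat M (-(1 / 2)) = 1 := by
  rw [rpowMat_mul_rpowMat hM]; norm_num [rpowMat_zero hM.1]

lemma rpowMat_neg_half_mul_rpowMat_half (hM : M.PosDef) :
    rpowMat M (-(1 / 2)) * rpowMat M (1 / 2) = 1 := by
  rw [rpowMat_mul_rpowMat hM]; norm_num [rpowMat_zero hM.1]

end RealPower

namespace Matrix

variable {ι p : Type} [Fintype ι] [DecidableEq ι]

lemma one_le_det_one_add {T : Matrix ι ι ℝ} (hT : T.PosSemidef) : 1 ≤ (1 + T).det := by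
  set U : Matrix ι ι ℝ := (hT.1.eigenvectorUnitary : Matrix ι ι ℝ)
  have hUU : U * star U = 1 := Unitary.coe_mul_star_self _
  have hspec : 1 + T = U * diagonal (fun i => 1 + hT.1.eigenvalues i) * star U := by
    conv_lhs => rw [hT.1.spectral_theorem, Unitary.conjStarAlgAut_apply]
    rw [← diagonal_add, diagonal_one, Matrix.mul_add, Matrix.add_mul, Matrix.mul_one, hUU]
    simp [U]
  rw [hspec, det_conj_of_mul_eq_one hUU (Unitary.coe_star_mul_self _), det_diagonal]
  exact Finset.one_le_prod fun i _ => le_add_of_nonneg_right (hT.eigenvalues_nonneg i)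

theorem PosSemidef.det_le_det_add {P Q : Matrix ι ι ℝ} (hP : P.PosSemidef) (hQ : Q.PosSemidef) :
    P.det ≤ (P + Q).det := by
  by_cases hdet : P.det = 0
  · exact hdet ▸ (hP.add hQ).det_nonneg
  have hPd : P.PosDef := hP.posDef_iff_det_ne_zero.mpr hdet
  set H := rpowMat P (1 / 2)
  set K := rpowMat P (-(1 / 2))
  have hHK : H * K = 1 := rpowMat_half_mul_rpowMat_neg_half hPd
  have hKH : K * H = 1 := rpowMat_neg_half_mul_rpowMat_half hPd
  have hHH : H * H = P := rpowMat_half_mul_rpowMat_half hPd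
  have hT : (K * Q * K).PosSemidef := by
    have hK : Kᴴ = K := (rpowMat_posDef hPd (-(1 / 2))).1
    simpa only [hK] using hQ.conjTranspose_mul_mul_same K
  have hsum : P + Q = H * (1 + K * Q * K) * H := by
    rw [Matrix.mul_add, Matrix.add_mul, Matrix.mul_one, hHH]
    congr 1
    calc Q = H * K * Q * (K * H) := by rw [hHK, hKH, Matrix.one_mul, Matrix.mul_one]
      _ = H * (K * Q * K) * H := by simp only [Matrix.mul_assoc]
  have hHdet := (rpowMat_posDef hPd (1 / 2)).det_pos
  calc P.det = H.det * 1 * H.det := by rw [mul_one, ← det_mul, hHH]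
    _ ≤ H.det * (1 + K * Q * K).det * H.det := by gcongr; exact one_le_det_one_add hT
    _ = (P + Q).det := by rw [hsum, det_mul, det_mul]

omit [DecidableEq ι] in
theorem det_mul_transpose_sq_le [Fintype p] [DecidableEq p] (M N : Matrix p ι ℝ)
    (hM : (M * Mᵀ).PosDef) : det (M * Nᵀ) ^ 2 ≤ det (M * Mᵀ) * det (N * Nᵀ) := by
  have hGram : (fromBlocks (M * Mᵀ) (M * Nᵀ) (M * Nᵀ)ᴴ (N * Nᵀ)).PosSemidef := by
    have h := posSemidef_self_mul_conjTranspose (fromRows M N)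
    rw [conjTranspose_eq_transpose_of_trivial, transpose_fromRows, fromRows_mul_fromCols] at h
    rwa [conjTranspose_eq_transpose_of_trivial, transpose_mul, transpose_transpose]
  have : Invertible (M * Mᵀ) := invertibleOfIsUnitDet _ hM.det_pos.ne'.isUnit
  set X := (M * Nᵀ)ᴴ * (M * Mᵀ)⁻¹ * (M * Nᵀ)
  have hX : X.PosSemidef := hM.inv.posSemidef.conjTranspose_mul_mul_same _
  have hXle : X.det ≤ (N * Nᵀ).det := by
    have hSchur : (N * Nᵀ - X).PosSemidef := (hM.fromBlocks₁₁ _ _).mp hGram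
    simpa only [add_sub_cancel] using hX.det_le_det_add hSchur
  have hXdet : X.det = det (M * Nᵀ) ^ 2 / det (M * Mᵀ) := by
    rw [det_mul, det_mul, det_nonsing_inv, conjTranspose_eq_transpose_of_trivial, det_transpose,
      Ring.inverse_eq_inv', div_eq_mul_inv]
    ring
  rw [hXdet, div_le_iff₀ hM.det_pos] at hXle
  linarith

lemma posDef_mul_diagonal_mul_transpose [Fintype p] {R : Matrix p ι ℝ}
    (hR : Function.Injective R.vecMul) {d : ι → ℝ} (hd : ∀ i, 0 < d i) :
    (R * diagonal d * Rᵀ).PosDef := by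
  simpa only [conjTranspose_eq_transpose_of_trivial] using
    (posDef_diagonal_iff.mpr hd).mul_mul_conjTranspose_same hR

lemma mul_diagonal_mul_transpose_mul_diagonal (R : Matrix p ι ℝ) (a b : ι → ℝ) :
    R * diagonal a * (R * diagonal b)ᵀ = R * diagonal (fun i => a i * b i) * Rᵀ := by
  rw [transpose_mul, diagonal_transpose, Matrix.mul_assoc, ← Matrix.mul_assoc (diagonal a),
    diagonal_mul_diagonal, ← Matrix.mul_assoc]

theorem convexOn_log_det_mul_diagonal_rpow_mul_transpose [Fintype p] [DecidableEq p]
    {R : Matrix p ι ℝ} (hR : Function.Injective R.vecMul) {μ : ι → ℝ}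
    (hμ : ∀ i, 0 < μ i) :
    ConvexOn ℝ univ fun s : ℝ => Real.log (R * diagonal (fun i => μ i ^ s) * Rᵀ).det := by
  have hpos : ∀ s : ℝ, (R * diagonal (fun i => μ i ^ s) * Rᵀ).PosDef := fun s =>
    posDef_mul_diagonal_mul_transpose hR fun i => Real.rpow_pos_of_pos (hμ i) s
  refine convexOn_univ_of_midpoint_le ?_ fun s u => ?_
  · have : ∀ i, Continuous fun s : ℝ => μ i ^ s := fun i =>
      continuous_const.rpow continuous_id fun _ => Or.inl (hμ i).ne'
    exact Continuous.log (by fun_prop) fun s => (hpos s).det_pos.ne'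
  have hgram : ∀ v w : ℝ,
      R * diagonal (fun i => μ i ^ (v / 2)) * (R * diagonal fun i => μ i ^ (w / 2))ᵀ
        = R * diagonal (fun i => μ i ^ ((v + w) / 2)) * Rᵀ := fun v w => by
    simp only [mul_diagonal_mul_transpose_mul_diagonal, ← Real.rpow_add (hμ _), add_div]
  have hcs := det_mul_transpose_sq_le (R * diagonal fun i => μ i ^ (s / 2))
    (R * diagonal fun i => μ i ^ (u / 2)) (by rw [hgram, add_self_div_two]; exact hpos s)
  rw [hgram, hgram, hgram, add_self_div_two, add_self_div_two] at hcs
  have hlog := Real.log_le_log (pow_pos (hpos _).det_pos 2) hcs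
  rw [Real.log_pow, Real.log_mul (hpos s).det_pos.ne' (hpos u).det_pos.ne'] at hlog
  push_cast at hlog
  linarith

lemma log_det_mul_diagonal_rpow_mul_transpose
    {S : Matrix ι ι ℝ} (hS : IsUnit S) {μ : ι → ℝ} (hμ : ∀ i, 0 < μ i) (s : ℝ) :
    Real.log (S * diagonal (fun i => μ i ^ s) * Sᵀ).det
      = Real.log (S * Sᵀ).det + s * ∑ i, Real.log (μ i) := by
  have hdet : S.det ≠ 0 := ((isUnit_iff_isUnit_det S).mp hS).ne_zero
  have hSS : (S * Sᵀ).det ≠ 0 := by rw [det_mul, det_transpose]; exact mul_ne_zero hdet hdet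
  have hpow : ∀ i, μ i ^ s ≠ 0 := fun i => (Real.rpow_pos_of_pos (hμ i) s).ne'
  rw [det_mul, det_mul, det_diagonal, mul_right_comm, ← det_mul,
    Real.log_mul hSS (Finset.prod_ne_zero_iff.mpr fun i _ => hpow i),
    Real.log_prod fun i _ => hpow i, Finset.mul_sum]
  simp only [Real.log_rpow (hμ _)]

section Blocks

variable {m n k α : Type}

lemma vecMul_toRows₁_injective [Fintype m] [Fintype n] [CommRing α] {S : Matrix (m ⊕ n) k α}
    (hS : Function.Injective S.vecMul) :
    Function.Injective S.toRows₁.vecMul :=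
  vecMul_injective_iff.mpr ((vecMul_injective_iff.mp hS).comp Sum.inl Sum.inl_injective)

lemma vecMul_toRows₂_injective [Fintype m] [Fintype n] [CommRing α] {S : Matrix (m ⊕ n) k α}
    (hS : Function.Injective S.vecMul) :
    Function.Injective S.toRows₂.vecMul :=
  vecMul_injective_iff.mpr ((vecMul_injective_iff.mp hS).comp Sum.inr Sum.inr_injective)

lemma toBlocks₁₁_mul_diagonal_mul_transpose [Fintype k] [DecidableEq k] [Semiring α]
    (S : Matrix (m ⊕ n) k α) (d : k → α) :
    (S * diagonal d * Sᵀ).toBlocks₁₁ = S.toRows₁ * diagonal d * S.toRows₁ᵀ := rfl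

lemma toBlocks₂₂_mul_diagonal_mul_transpose [Fintype k] [DecidableEq k] [Semiring α]
    (S : Matrix (m ⊕ n) k α) (d : k → α) :
    (S * diagonal d * Sᵀ).toBlocks₂₂ = S.toRows₂ * diagonal d * S.toRows₂ᵀ := rfl

end Blocks

end Matrix

section GeometricMean

variable {ι : Type} [Fintype ι] [DecidableEq ι] {V W : Matrix ι ι ℝ}

lemma isHermitian_rpowMat_mul_mul_rpowMat (hV : V.PosDef) (hW : W.IsHermitian) (t : ℝ) :
    (rpowMat V t * W * rpowMat V t).IsHermitian := by
  have h : (rpowMat V t)ᴴ = rpowMat V t := (rpowMat_posDef hV t).1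
  simpa only [h] using isHermitian_conjTranspose_mul_mul (rpowMat V t) hW

lemma wGeomMean_zero (hV : V.PosDef) (hW : W.IsHermitian) : wGeomMean V W 0 = V := by
  have hC := isHermitian_rpowMat_mul_mul_rpowMat hV hW (-(1 / 2))
  rw [wGeomMean, rpowMat_zero hC, Matrix.mul_one, rpowMat_half_mul_rpowMat_half hV]

lemma wGeomMean_one (hV : V.PosDef) (hW : W.IsHermitian) : wGeomMean V W 1 = W := by
  have hC := isHermitian_rpowMat_mul_mul_rpowMat hV hW (-(1 / 2))
  rw [wGeomMean, rpowMat_one hC]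
  simp only [← Matrix.mul_assoc, rpowMat_half_mul_rpowMat_neg_half hV, Matrix.one_mul]
  rw [Matrix.mul_assoc, rpowMat_neg_half_mul_rpowMat_half hV, Matrix.mul_one]

theorem exists_wGeomMean_eq_mul_diagonal_rpow_mul_transpose (hV : V.PosDef) (hW : W.PosDef) :
    ∃ (S : Matrix ι ι ℝ) (μ : ι → ℝ), IsUnit S ∧ (∀ i, 0 < μ i) ∧
      ∀ s, wGeomMean V W s = S * diagonal (fun i => μ i ^ s) * Sᵀ := by
  have hH := rpowMat_posDef hV (1 / 2)
  have hK := rpowMat_posDef hV (-(1 / 2))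
  have hC : (rpowMat V (-(1 / 2)) * W * rpowMat V (-(1 / 2))).PosDef := by
    have := (hK.isUnit.posDef_star_left_conjugate_iff (x := W)).mpr hW
    rwa [star_eq_conjTranspose, hK.1.eq] at this
  set U : Matrix ι ι ℝ := (hC.1.eigenvectorUnitary : Matrix ι ι ℝ)
  refine ⟨rpowMat V (1 / 2) * U, hC.1.eigenvalues, hH.isUnit.mul Unitary.isUnit_coe,
    hC.eigenvalues_pos, fun s => ?_⟩
  rw [wGeomMean, rpowMat_of_isHermitian hC.1, transpose_mul,
    ← conjTranspose_eq_transpose_of_trivial U, ← conjTranspose_eq_transpose_of_trivial, hH.1.eq,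
    star_eq_conjTranspose]
  simp only [Matrix.mul_assoc, U]

end GeometricMean

section MutualInformation

variable {a b : ℕ}

lemma IM_eq_of_posDef {X : Matrix (Fin a ⊕ Fin b) (Fin a ⊕ Fin b) ℝ} (hX : X.PosDef) :
    IM X =
      (Real.log X.toBlocks₁₁.det + Real.log X.toBlocks₂₂.det - Real.log X.det) / 2 := by
  have h₁ : X.toBlocks₁₁.PosDef := hX.submatrix Sum.inl_injective
  have h₂ : X.toBlocks₂₂.PosDef := hX.submatrix Sum.inr_injective
  rw [IM, Real.log_div (mul_pos h₁.det_pos h₂.det_pos).ne' hX.det_pos.ne',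
    Real.log_mul h₁.det_pos.ne' h₂.det_pos.ne']
  ring

theorem convexOn_IM_mul_diagonal_rpow_mul_transpose
    {S : Matrix (Fin a ⊕ Fin b) (Fin a ⊕ Fin b) ℝ} (hS : IsUnit S)
    {μ : Fin a ⊕ Fin b → ℝ} (hμ : ∀ i, 0 < μ i) :
    ConvexOn ℝ univ fun s : ℝ => IM (S * diagonal (fun i => μ i ^ s) * Sᵀ) := by
  have hrows : Function.Injective S.vecMul := vecMul_injective_iff_isUnit.mpr hS
  have h₁ :=
    convexOn_log_det_mul_diagonal_rpow_mul_transpose (vecMul_toRows₁_injective hrows) hμ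
  have h₂ :=
    convexOn_log_det_mul_diagonal_rpow_mul_transpose (vecMul_toRows₂_injective hrows) hμ
  have hIM : ∀ s : ℝ, IM (S * diagonal (fun i => μ i ^ s) * Sᵀ)
      = (Real.log (S.toRows₁ * diagonal (fun i => μ i ^ s) * S.toRows₁ᵀ).det
        + Real.log (S.toRows₂ * diagonal (fun i => μ i ^ s) * S.toRows₂ᵀ).det
        - (Real.log (S * Sᵀ).det + s * ∑ i, Real.log (μ i))) / 2 := fun s => by
    rw [IM_eq_of_posDef (posDef_mul_diagonal_mul_transpose hrows fun i =>
        Real.rpow_pos_of_pos (hμ i) s), toBlocks₁₁_mul_diagonal_mul_transpose,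
      toBlocks₂₂_mul_diagonal_mul_transpose, log_det_mul_diagonal_rpow_mul_transpose hS hμ]
  refine ⟨convex_univ, fun x _ y _ α β hα hβ hαβ => ?_⟩
  have hx₁ := h₁.2 (mem_univ x) (mem_univ y) hα hβ hαβ
  have hx₂ := h₂.2 (mem_univ x) (mem_univ y) hα hβ hαβ
  simp only [smul_eq_mul, hIM] at hx₁ hx₂ ⊢
  obtain rfl : α = 1 - β := by linarith
  linarith

end MutualInformation

/-- **Geodesic convexity of the log-det mutual information.** For positive definite
bipartite `V`, `W` and `t ∈ [0,1]`,
`I_M(A:B)_{V #_t W} ≤ (1−t)·I_M(A:B)_V + t·I_M(A:B)_W`. -/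
theorem IM_convex_geodesic (a b : ℕ)
    (V W : Matrix (Fin a ⊕ Fin b) (Fin a ⊕ Fin b) ℝ)
    (hV : V.PosDef) (hW : W.PosDef) (t : ℝ) (ht : t ∈ Set.Icc (0 : ℝ) 1) :
    IM (wGeomMean V W t) ≤ (1 - t) * IM V + t * IM W := by
  obtain ⟨S, μ, hS, hμ, hG⟩ := exists_wGeomMean_eq_mul_diagonal_rpow_mul_transpose hV hW
  have h := (convexOn_IM_mul_diagonal_rpow_mul_transpose hS hμ).2 (mem_univ 0) (mem_univ 1)
    (sub_nonneg.mpr ht.2) ht.1 (sub_add_cancel 1 t)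
  simpa only [smul_eq_mul, mul_zero, mul_one, zero_add, ← hG, wGeomMean_zero hV hW.1,
    wGeomMean_one hV hW.1] using h
end

section
/- Let V_ABC = [[A, X, Y], [Xᵀ, B, Z], [Yᵀ, Zᵀ, C]] be real symmetric positive definite, and set Δ := X − Y C^{-1} Zᵀ. Then the following chain of inequalities holds: I_M(A:B|C)_V ≥ ½ Tr[(V_AC/V_C)^{-1} Δ (V_BC/V_C)^{-1} Δᵀ] ≥ ½ Tr[A^{-1} Δ B^{-1} Δᵀ], where the last quantity equals ½ ‖A^{-1/2} Δ B^{-1/2}‖₂² (half the squared Frobenius norm). In particular the lower bound is faithful: it vanishes exactly when X = Y C^{-1} Zᵀ. -/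
/-!
Taking Schur complements with respect to `C` turns the conditional quantity into an unconditional
one: with `S_A = V_AC/V_C`, `S_B = V_BC/V_C` and `W = V/V_C = [[S_A, Δ], [Δᵀ, S_B]]`, the ratio of
determinants is `det S_A · det S_B / det W = det S_A / det (S_A - Δ S_B⁻¹ Δᵀ)`. The inequality
`log det M ≤ tr M - n` for positive definite `M` (from `log λ ≤ λ - 1` on the eigenvalues),
applied to the congruent matrix `S_A^{-1/2} (S_A - Δ S_B⁻¹ Δᵀ) S_A^{-1/2}`, gives the first bound.
The second follows from `S_A ≤ A`, `S_B ≤ B` and the antitonicity of the inverse in the Loewner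
order, and faithfulness from writing `Tr[A⁻¹ Δ B⁻¹ Δᵀ]` as the squared Frobenius norm of
`A^{-1/2} Δ B^{-1/2}`.
-/

open scoped MatrixOrder ComplexOrder

namespace Matrix

variable {𝕜 : Type*} [RCLike 𝕜] {l m n : Type*}

lemma PosDef.toBlocks₁₁ {M : Matrix (m ⊕ n) (m ⊕ n) 𝕜} (hM : M.PosDef) : M.toBlocks₁₁.PosDef :=
  hM.submatrix Sum.inl_injective

lemma PosDef.toBlocks₂₂ {M : Matrix (m ⊕ n) (m ⊕ n) 𝕜} (hM : M.PosDef) : M.toBlocks₂₂.PosDef :=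
  hM.submatrix Sum.inr_injective

variable [Fintype n] [DecidableEq n]

lemma PosSemidef.exists_eq_conjTranspose_mul_self {M : Matrix n n 𝕜} (hM : M.PosSemidef) :
    ∃ R : Matrix n n 𝕜, M = Rᴴ * R :=
  ⟨CFC.sqrt M, by rw [(nonneg_iff_posSemidef.mp (CFC.sqrt_nonneg M)).isHermitian.eq,
    CFC.sqrt_mul_sqrt_self M hM.nonneg]⟩

lemma PosDef.exists_isUnit_eq_conjTranspose_mul_self {M : Matrix n n 𝕜} (hM : M.PosDef) :
    ∃ R : Matrix n n 𝕜, IsUnit R ∧ M = Rᴴ * R := by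
  obtain ⟨R, rfl⟩ := hM.posSemidef.exists_eq_conjTranspose_mul_self
  refine ⟨R, (isUnit_iff_isUnit_det R).mpr (isUnit_of_mul_isUnit_right (x := Rᴴ.det) ?_), rfl⟩
  rw [← det_mul, ← isUnit_iff_isUnit_det]
  exact hM.isUnit

/-- Both `P ≤ Q` and `Q⁻¹ ≤ P⁻¹` say that `fromBlocks Q 1 1 P⁻¹` is positive semidefinite: they
are its Schur complements with respect to the two diagonal blocks. -/
lemma PosDef.inv_le_inv {P Q : Matrix n n 𝕜} (hP : P.PosDef) (hPQ : P ≤ Q) : Q⁻¹ ≤ P⁻¹ := by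
  have hQ : Q.PosDef := by simpa using hP.add_posSemidef hPQ
  have : Invertible P := hP.isUnit.invertible
  have : Invertible P⁻¹ := hP.inv.isUnit.invertible
  have : Invertible Q := hQ.isUnit.invertible
  have h₂₂ := PosDef.fromBlocks₂₂ Q 1 hP.inv
  have h₁₁ := PosDef.fromBlocks₁₁ 1 P⁻¹ hQ
  simp only [conjTranspose_one, mul_one, one_mul, inv_inv_of_invertible] at h₂₂ h₁₁
  exact h₁₁.mp (h₂₂.mpr hPQ)

lemma PosSemidef.trace_mul_nonneg {A B : Matrix n n 𝕜} (hA : A.PosSemidef) (hB : B.PosSemidef) :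
    0 ≤ (A * B).trace := by
  obtain ⟨R, rfl⟩ := hA.exists_eq_conjTranspose_mul_self
  rw [Matrix.mul_assoc, trace_mul_comm]
  exact (hB.mul_mul_conjTranspose_same R).trace_nonneg

lemma PosDef.log_det_le_trace_sub_card {M : Matrix n n ℝ} (hM : M.PosDef) :
    Real.log M.det ≤ M.trace - Fintype.card n := by
  rw [hM.isHermitian.det_eq_prod_eigenvalues, hM.isHermitian.trace_eq_sum_eigenvalues]
  simp only [RCLike.ofReal_real_eq_id, id_eq]
  rw [Real.log_prod fun i _ => (hM.eigenvalues_pos i).ne']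
  calc ∑ i, Real.log (hM.isHermitian.eigenvalues i)
      ≤ ∑ i, (hM.isHermitian.eigenvalues i - 1) :=
        Finset.sum_le_sum fun i _ => Real.log_le_sub_one_of_pos (hM.eigenvalues_pos i)
    _ = ∑ i, hM.isHermitian.eigenvalues i - Fintype.card n := by simp [Finset.sum_sub_distrib]

lemma PosDef.log_det_sub_log_det_le {P S : Matrix n n ℝ} (hP : P.PosDef) (hS : S.PosDef) :
    Real.log S.det - Real.log P.det ≤ (P⁻¹ * S).trace - Fintype.card n := by
  obtain ⟨R, hR, hPR⟩ := hP.inv.exists_isUnit_eq_conjTranspose_mul_self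
  have hM : (R * S * Rᴴ).PosDef := (IsUnit.posDef_star_right_conjugate_iff hR).mpr hS
  have hdet : (R * S * Rᴴ).det = S.det / P.det := by
    rw [det_mul, det_mul, mul_comm, ← mul_assoc, ← det_mul, ← hPR, det_nonsing_inv,
      Ring.inverse_eq_inv', div_eq_inv_mul]
  have htrace : (R * S * Rᴴ).trace = (P⁻¹ * S).trace := by
    rw [trace_mul_comm, hPR, Matrix.mul_assoc]
  have := hM.log_det_le_trace_sub_card
  rwa [hdet, htrace, Real.log_div hS.det_pos.ne' hP.det_pos.ne'] at this

lemma fromBlocks_sub_fromRows_mul_inv_mul_conjTranspose (A : Matrix l l 𝕜) (B : Matrix m m 𝕜)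
    {C : Matrix n n 𝕜} (X : Matrix l m 𝕜) (Y : Matrix l n 𝕜) (Z : Matrix m n 𝕜)
    (hC : C.IsHermitian) :
    fromBlocks A X Xᴴ B - fromRows Y Z * C⁻¹ * (fromRows Y Z)ᴴ =
      fromBlocks (A - Y * C⁻¹ * Yᴴ) (X - Y * C⁻¹ * Zᴴ) (X - Y * C⁻¹ * Zᴴ)ᴴ
        (B - Z * C⁻¹ * Zᴴ) := by
  rw [conjTranspose_fromRows_eq_fromCols_conjTranspose, fromRows_mul, fromRows_mul_fromCols]
  simp only [conjTranspose_sub, conjTranspose_mul, conjTranspose_nonsing_inv, hC.eq,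
    conjTranspose_conjTranspose, Matrix.mul_assoc]
  ext (i | i) (j | j) <;> rfl

variable [Fintype m]

lemma trace_mul_mul_mul_conjTranspose_mono {U U' : Matrix n n 𝕜} {W W' : Matrix m m 𝕜}
    (hU : 0 ≤ U) (hUU' : U ≤ U') (hW : 0 ≤ W) (hWW' : W ≤ W') (D : Matrix n m 𝕜) :
    (U * D * W * Dᴴ).trace ≤ (U' * D * W' * Dᴴ).trace := by
  have hsplit : U' * D * W' * Dᴴ - U * D * W * Dᴴ =
      (U' - U) * (D * W' * Dᴴ) + U * (D * (W' - W) * Dᴴ) := by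
    simp only [Matrix.sub_mul, Matrix.mul_sub, Matrix.mul_assoc]
    abel
  have h₁ := PosSemidef.trace_mul_nonneg (le_iff.mp hUU')
    ((nonneg_iff_posSemidef.mp (hW.trans hWW')).mul_mul_conjTranspose_same D)
  have h₂ := PosSemidef.trace_mul_nonneg (nonneg_iff_posSemidef.mp hU)
    ((le_iff.mp hWW').mul_mul_conjTranspose_same D)
  rw [← sub_nonneg, ← trace_sub, hsplit, trace_add]
  exact add_nonneg h₁ h₂

variable [DecidableEq m]

lemma PosDef.schur_fromBlocks₂₂ {A : Matrix m m 𝕜} {B : Matrix m n 𝕜} {D : Matrix n n 𝕜}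
    (h : (fromBlocks A B Bᴴ D).PosDef) : (A - B * D⁻¹ * Bᴴ).PosDef := by
  have hD : D.PosDef := h.toBlocks₂₂
  have : Invertible D := hD.isUnit.invertible
  have hdet := h.det_pos.ne'
  rw [det_fromBlocks₂₂, invOf_eq_nonsing_inv] at hdet
  exact ((PosDef.fromBlocks₂₂ A B hD).mp h.posSemidef).posDef_iff_det_ne_zero.mpr
    (right_ne_zero_of_mul hdet)

lemma trace_inv_mul_mul_inv_mul_conjTranspose_eq_zero_iff {P : Matrix m m 𝕜} {Q : Matrix n n 𝕜}
    (hP : P.PosDef) (hQ : Q.PosDef) (D : Matrix m n 𝕜) :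
    (P⁻¹ * D * Q⁻¹ * Dᴴ).trace = 0 ↔ D = 0 := by
  obtain ⟨R, hR, hPR⟩ := hP.inv.exists_isUnit_eq_conjTranspose_mul_self
  obtain ⟨S, hS, hQS⟩ := hQ.inv.exists_isUnit_eq_conjTranspose_mul_self
  have : Invertible R := hR.invertible
  have : Invertible Sᴴ := hS.star.invertible
  have htrace : (P⁻¹ * D * Q⁻¹ * Dᴴ).trace = ((R * D * Sᴴ) * (R * D * Sᴴ)ᴴ).trace := by
    simp only [hPR, hQS, conjTranspose_mul, conjTranspose_conjTranspose, Matrix.mul_assoc]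
    rw [trace_mul_comm]
    simp only [Matrix.mul_assoc]
  rw [htrace, trace_mul_conjTranspose_self_eq_zero_iff]
  refine ⟨fun h => ?_, fun h => by simp [h]⟩
  rw [← inv_mul_cancel_left_of_invertible (A := R) D, ← mul_inv_cancel_right_of_invertible
    (A := Sᴴ) (R * D), h, Matrix.zero_mul, Matrix.mul_zero]

lemma PosDef.trace_inv_mul_mul_inv_mul_conjTranspose_le_log {P : Matrix m m ℝ} {Q : Matrix n n ℝ}
    {D : Matrix m n ℝ} (h : (fromBlocks P D Dᴴ Q).PosDef) :
    (P⁻¹ * D * Q⁻¹ * Dᴴ).trace ≤ Real.log (P.det * Q.det / (fromBlocks P D Dᴴ Q).det) := by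
  have hP : P.PosDef := h.toBlocks₁₁
  have hQ : Q.PosDef := h.toBlocks₂₂
  have hS := h.schur_fromBlocks₂₂
  have : Invertible Q := hQ.isUnit.invertible
  have hdet : (fromBlocks P D Dᴴ Q).det = (P - D * Q⁻¹ * Dᴴ).det * Q.det := by
    rw [det_fromBlocks₂₂, invOf_eq_nonsing_inv, mul_comm]
  have htrace : (P⁻¹ * (P - D * Q⁻¹ * Dᴴ)).trace =
      Fintype.card m - (P⁻¹ * D * Q⁻¹ * Dᴴ).trace := by
    rw [Matrix.mul_sub, nonsing_inv_mul _ ((isUnit_iff_isUnit_det P).mp hP.isUnit), trace_sub,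
      trace_one]
    simp only [Matrix.mul_assoc]
  have := hP.log_det_sub_log_det_le hS
  rw [hdet, mul_div_mul_right _ _ hQ.det_pos.ne', Real.log_div hP.det_pos.ne' hS.det_pos.ne']
  linarith

variable [Fintype l] [DecidableEq l]

lemma det_fromBlocks_mul_det_fromBlocks_div_eq_schur {A : Matrix l l 𝕜} {B : Matrix m m 𝕜}
    {C : Matrix n n 𝕜} (X : Matrix l m 𝕜) (Y : Matrix l n 𝕜) (Z : Matrix m n 𝕜)
    (hC : IsUnit C.det) :
    (fromBlocks A Y Yᴴ C).det * (fromBlocks B Z Zᴴ C).det /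
        (C.det * (fromBlocks (fromBlocks A X Xᴴ B) (fromRows Y Z) (fromRows Y Z)ᴴ C).det) =
      (A - Y * C⁻¹ * Yᴴ).det * (B - Z * C⁻¹ * Zᴴ).det /
        (fromBlocks A X Xᴴ B - fromRows Y Z * C⁻¹ * (fromRows Y Z)ᴴ).det := by
  have : Invertible C := C.invertibleOfIsUnitDet hC
  simp only [det_fromBlocks₂₂, invOf_eq_nonsing_inv]
  have hC₀ := hC.ne_zero
  field_simp

end Matrix

open Matrix

/-- **Faithful lower bound on the log-det conditional mutual information.**
For positive definite `V = [[A, X, Y], [Xᵀ, B, Z], [Yᵀ, Zᵀ, C]]` and `Δ := X − Y C⁻¹ Zᵀ`: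
`I_M(A:B|C)_V ≥ ½ Tr[(V_AC/V_C)⁻¹ Δ (V_BC/V_C)⁻¹ Δᵀ] ≥ ½ Tr[A⁻¹ Δ B⁻¹ Δᵀ]`,
and the last quantity vanishes exactly when `X = Y C⁻¹ Zᵀ`. -/
theorem logdet_cmi_lower_bound (a b c : ℕ)
    (A : Matrix (Fin a) (Fin a) ℝ) (B : Matrix (Fin b) (Fin b) ℝ)
    (C : Matrix (Fin c) (Fin c) ℝ)
    (X : Matrix (Fin a) (Fin b) ℝ) (Y : Matrix (Fin a) (Fin c) ℝ)
    (Z : Matrix (Fin b) (Fin c) ℝ)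
    (hV : (fromBlocks (fromBlocks A X Xᵀ B) (fromRows Y Z) (fromCols Yᵀ Zᵀ)
            C).PosDef) :
    (1 / 2 : ℝ) * Real.log
        (((fromBlocks A Y Yᵀ C).det * (fromBlocks B Z Zᵀ C).det) /
          (C.det *
            (fromBlocks (fromBlocks A X Xᵀ B) (fromRows Y Z) (fromCols Yᵀ Zᵀ) C).det))
      ≥ (1 / 2 : ℝ) * Matrix.trace
          ((A - Y * C⁻¹ * Yᵀ)⁻¹ * (X - Y * C⁻¹ * Zᵀ) *
            (B - Z * C⁻¹ * Zᵀ)⁻¹ * (X - Y * C⁻¹ * Zᵀ)ᵀ)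
    ∧ (1 / 2 : ℝ) * Matrix.trace
          ((A - Y * C⁻¹ * Yᵀ)⁻¹ * (X - Y * C⁻¹ * Zᵀ) *
            (B - Z * C⁻¹ * Zᵀ)⁻¹ * (X - Y * C⁻¹ * Zᵀ)ᵀ)
        ≥ (1 / 2 : ℝ) * Matrix.trace
            (A⁻¹ * (X - Y * C⁻¹ * Zᵀ) * B⁻¹ * (X - Y * C⁻¹ * Zᵀ)ᵀ)
    ∧ ((1 / 2 : ℝ) * Matrix.trace
            (A⁻¹ * (X - Y * C⁻¹ * Zᵀ) * B⁻¹ * (X - Y * C⁻¹ * Zᵀ)ᵀ) = 0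
        ↔ X = Y * C⁻¹ * Zᵀ) := by
  simp only [← conjTranspose_eq_transpose_of_trivial,
    ← conjTranspose_fromRows_eq_fromCols_conjTranspose] at hV ⊢
  have hC : C.PosDef := hV.toBlocks₂₂
  have hA : A.PosDef := hV.toBlocks₁₁.toBlocks₁₁
  have hB : B.PosDef := hV.toBlocks₁₁.toBlocks₂₂
  have hW := hV.schur_fromBlocks₂₂
  rw [fromBlocks_sub_fromRows_mul_inv_mul_conjTranspose _ _ _ _ _ hC.isHermitian] at hW
  have hSA : A - Y * C⁻¹ * Yᴴ ≤ A :=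
    sub_le_self _ (hC.inv.posSemidef.mul_mul_conjTranspose_same Y).nonneg
  have hSB : B - Z * C⁻¹ * Zᴴ ≤ B :=
    sub_le_self _ (hC.inv.posSemidef.mul_mul_conjTranspose_same Z).nonneg
  refine ⟨?_, ?_, ?_⟩
  · rw [det_fromBlocks_mul_det_fromBlocks_div_eq_schur _ _ _ hC.det_pos.ne'.isUnit,
      fromBlocks_sub_fromRows_mul_inv_mul_conjTranspose _ _ _ _ _ hC.isHermitian]
    linarith [hW.trace_inv_mul_mul_inv_mul_conjTranspose_le_log]
  · exact mul_le_mul_of_nonneg_left (trace_mul_mul_mul_conjTranspose_mono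
      hA.inv.posSemidef.nonneg (hW.toBlocks₁₁.inv_le_inv hSA) hB.inv.posSemidef.nonneg
      (hW.toBlocks₂₂.inv_le_inv hSB) _) one_half_pos.le
  · rw [mul_eq_zero, or_iff_right (by norm_num),
      trace_inv_mul_mul_inv_mul_conjTranspose_eq_zero_iff hA hB, sub_eq_zero]
end

section
/- Let ρ_1, …, ρ_n be density matrices on ℂ^d and (p_1, …, p_n) a probability distribution. Then the concavity gap of the von Neumann entropy is bounded below as follows: H(Σ_i p_i ρ_i) − Σ_i p_i H(ρ_i) ≥ Σ_i (−p_i ln p_i) − ln(1 + 2 Σ_{1 ≤ i < j ≤ n} √(p_i p_j) · Tr[√ρ_i √ρ_j]), where each overlap Tr[√ρ_i √ρ_j] is a nonnegative real number. In particular, since Tr[√ρ_i √ρ_j] ≤ F(ρ_i, ρ_j), the same lower bound holds with Tr[√ρ_i √ρ_j] replaced by the fidelity F(ρ_i, ρ_j). -/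
open Matrix ComplexOrder
open scoped Classical

/-- Von Neumann entropy `H(ρ) = Σ_i (−λ_i ln λ_i)` of a Hermitian matrix, via its
eigenvalues (junk value `0` on non-Hermitian matrices). -/
noncomputable def vN {ι : Type} [Fintype ι] [DecidableEq ι] (ρ : Matrix ι ι ℂ) : ℝ :=
  if h : ρ.IsHermitian then ∑ i, Real.negMulLog (h.eigenvalues i) else 0

/-- Positive semidefinite square root of a positive semidefinite matrix
(junk value `0` otherwise). -/
noncomputable def msqrt {ι : Type} [Fintype ι] [DecidableEq ι]
    (ρ : Matrix ι ι ℂ) : Matrix ι ι ℂ :=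
  if h : ρ.PosSemidef then
    (h.1.eigenvectorUnitary : Matrix ι ι ℂ) * diagonal ((↑) ∘ Real.sqrt ∘ h.1.eigenvalues) *
      (star h.1.eigenvectorUnitary : Matrix ι ι ℂ)
  else 0

/-- The fidelity `F(ρ,σ) = Tr √(√ρ σ √ρ)` of two (density) matrices. -/
noncomputable def fidelity {ι : Type} [Fintype ι] [DecidableEq ι]
    (ρ σ : Matrix ι ι ℂ) : ℝ :=
  ((msqrt (msqrt ρ * σ * msqrt ρ)).trace).re

/-!
Write `σ = ∑ pᵢ ρᵢ`, diagonalize `ρᵢ = ∑ₖ λᵢₖ |uᵢₖ⟩⟨uᵢₖ|` and `σ = ∑ₗ μₗ |vₗ⟩⟨vₗ|`, and put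
`cᵢₖₗ = |⟨uᵢₖ, vₗ⟩|²`. For each `(i, k)` the row `cᵢₖ·` is a probability vector, and it carries
the distribution `νᵢₖ = pᵢ λᵢₖ` (whose entropy is `H(p) + ∑ pᵢ H(ρᵢ)`) to the spectrum `μ` of `σ`.
The entropy gain `H(μ) - H(ν)` is the relative entropy of the weights `c ν` against `c μ`, and by
Jensen's inequality for `ln` it is at least `-2 ln ∑ c √(ν μ)`. That sum equals
`∑ᵢ √pᵢ Tr[√ρᵢ √σ] = Tr[A √σ]` with `A = ∑ √pᵢ √ρᵢ`, and Cauchy–Schwarz for the Hilbert–Schmidt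
inner product gives `Tr[A √σ]² ≤ Tr[A²] Tr σ = 1 + 2 ∑_{i<j} √(pᵢ pⱼ) Tr[√ρᵢ √ρⱼ]`.
For the fidelity version, `Tr[√ρ √σ] = Re Tr N ≤ Tr |N| = F(ρ, σ)` with `N = √σ √ρ`.
-/

namespace Real

theorem neg_two_mul_log_sum_sqrt_le {J : Type*} [Fintype J] (c a b : J → ℝ)
    (hc : ∀ j, 0 ≤ c j) (ha : ∀ j, 0 ≤ a j) (hca : ∑ j, c j * a j = 1)
    (hb : ∀ j, c j * a j ≠ 0 → 0 < b j) :
    -2 * log (∑ j, c j * (√(a j) * √(b j))) ≤ ∑ j, c j * a j * (log (a j) - log (b j)) := by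
  set t := Finset.univ.filter fun j => c j * a j ≠ 0
  have hpos : ∀ j ∈ t, 0 < a j ∧ 0 < b j := fun j hj => by
    have hj : c j * a j ≠ 0 := (Finset.mem_filter.mp hj).2
    exact ⟨(ha j).lt_of_ne' (right_ne_zero_of_mul hj), hb j hj⟩
  have restrict : ∀ f : J → ℝ, (∀ j, c j * a j = 0 → f j = 0) → ∑ j ∈ t, f j = ∑ j, f j :=
    fun f hf => Finset.sum_filter_of_ne fun j _ hfj => mt (hf j) hfj
  -- Jensen's inequality for `log` at the points `√b / √a`, weighted by `c a`.
  have jensen := strictConcaveOn_log_Ioi.concaveOn.le_map_sum (t := t)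
    (w := fun j => c j * a j) (p := fun j => √(b j) / √(a j))
    (fun j _ => mul_nonneg (hc j) (ha j))
    (by rw [restrict _ fun j h => h, hca])
    (fun j hj => div_pos (sqrt_pos.2 (hpos j hj).2) (sqrt_pos.2 (hpos j hj).1))
  have hlog : ∑ j ∈ t, (c j * a j) • log (√(b j) / √(a j))
      = -(∑ j, c j * a j * (log (a j) - log (b j))) / 2 := by
    rw [← restrict _ fun j h => by simp [h], neg_div, Finset.sum_div, ← Finset.sum_neg_distrib]
    refine Finset.sum_congr rfl fun j hj => ?_
    obtain ⟨ha, hb⟩ := hpos j hj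
    rw [smul_eq_mul, log_div (sqrt_pos.2 hb).ne' (sqrt_pos.2 ha).ne', log_sqrt hb.le,
      log_sqrt ha.le]
    ring
  have hsum : ∑ j ∈ t, (c j * a j) • (√(b j) / √(a j)) = ∑ j, c j * (√(a j) * √(b j)) := by
    rw [← restrict _ fun j h => ?_]
    · refine Finset.sum_congr rfl fun j hj => ?_
      rw [smul_eq_mul, mul_assoc, ← mul_div_assoc, mul_div_right_comm, div_sqrt]
    · rcases mul_eq_zero.mp h with h | h <;> simp [h]
  rw [hlog, hsum] at jensen
  linarith

theorem neg_two_mul_log_le_sum_negMulLog_sub_of_vecMul_eq {J L : Type*} [Fintype J] [Fintype L]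
    (ν : J → ℝ) (C : Matrix J L ℝ) (μ : L → ℝ) (hν : ∀ j, 0 ≤ ν j) (hν1 : ∑ j, ν j = 1)
    (hC : ∀ j l, 0 ≤ C j l) (hC1 : ∀ j, ∑ l, C j l = 1) (hμ : ν ᵥ* C = μ) :
    -2 * log (∑ j, ∑ l, C j l * (√(ν j) * √(μ l)))
      ≤ ∑ l, negMulLog (μ l) - ∑ j, negMulLog (ν j) := by
  have hμ' : ∀ l, μ l = ∑ j, ν j * C j l := fun l => by rw [← hμ]; rfl
  have hweights : ∑ x : J × L, C x.1 x.2 * ν x.1 = 1 := by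
    rw [Fintype.sum_prod_type, ← hν1]
    exact Finset.sum_congr rfl fun j _ => by simp only [← Finset.sum_mul, hC1, one_mul]
  have hsupp : ∀ x : J × L, C x.1 x.2 * ν x.1 ≠ 0 → 0 < μ x.2 := fun x hx => by
    refine hx.symm.lt_of_le (mul_nonneg (hC _ _) (hν _)) |>.trans_le ?_
    rw [hμ', mul_comm]
    exact Finset.single_le_sum (fun j _ => mul_nonneg (hν j) (hC j x.2)) (Finset.mem_univ x.1)
  have key := neg_two_mul_log_sum_sqrt_le (fun x : J × L => C x.1 x.2) (fun x => ν x.1)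
    (fun x => μ x.2) (fun x => hC _ _) (fun x => hν _) hweights hsupp
  have hentropy : ∑ x : J × L, C x.1 x.2 * ν x.1 * (log (ν x.1) - log (μ x.2))
      = ∑ l, negMulLog (μ l) - ∑ j, negMulLog (ν j) := by
    have hν_log : ∑ j, ∑ l, C j l * ν j * log (ν j) = ∑ j, ν j * log (ν j) := by
      simp only [mul_assoc, ← Finset.sum_mul, hC1, one_mul]
    have hμ_log : ∑ j, ∑ l, C j l * ν j * log (μ l) = ∑ l, μ l * log (μ l) := by
      rw [Finset.sum_comm]
      refine Finset.sum_congr rfl fun l _ => ?_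
      rw [hμ', Finset.sum_mul]
      exact Finset.sum_congr rfl fun j _ => by ring
    simp only [Fintype.sum_prod_type, mul_sub, Finset.sum_sub_distrib, hν_log, hμ_log, negMulLog,
      neg_mul, Finset.sum_neg_distrib]
    ring
  rw [← hentropy]
  simpa only [Fintype.sum_prod_type] using key

theorem two_mul_log_le_log_of_sq_le {x y : ℝ} (h : x ^ 2 ≤ y) (hy : 1 ≤ y) :
    2 * log x ≤ log y := by
  rw [show 2 * log x = log (x ^ 2) by rw [log_pow]; norm_num]
  rcases eq_or_ne x 0 with rfl | hx
  · simpa using log_nonneg hy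
  · exact log_le_log (by positivity) h

theorem sum_negMulLog_mul_eq {I K : Type*} [Fintype I] [Fintype K] (p : I → ℝ) (q : I → K → ℝ)
    (hq : ∀ i, ∑ k, q i k = 1) :
    ∑ i, ∑ k, negMulLog (p i * q i k)
      = ∑ i, p i * ∑ k, negMulLog (q i k) + ∑ i, negMulLog (p i) := by
  simp only [negMulLog_mul, Finset.sum_add_distrib, ← Finset.sum_mul, ← Finset.mul_sum, hq,
    one_mul]
  ring

end Real

theorem Finset.sum_sum_eq_sum_add_two_mul_sum_lt {I R : Type*} [Fintype I] [LinearOrder I]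
    [Semiring R] {f : I → I → R} (hf : ∀ i j, f i j = f j i) :
    ∑ i, ∑ j, f i j = ∑ i, f i i + 2 * ∑ i, ∑ j, if i < j then f i j else 0 := by
  have split : ∀ i j, f i j = ((if i < j then f i j else 0) + if i = j then f i j else 0) +
      if j < i then f i j else 0 := fun i j => by
    rcases lt_trichotomy i j with h | rfl | h
    · simp [h, h.ne, h.not_gt]
    · simp
    · simp [h, h.ne', h.not_gt]
  have swap : (∑ i, ∑ j, if j < i then f i j else 0) = ∑ i, ∑ j, if i < j then f i j else 0 := by
    rw [Finset.sum_comm]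
    simp only [hf]
  rw [Finset.sum_congr rfl fun i _ => Finset.sum_congr rfl fun j _ => split i j]
  simp only [Finset.sum_add_distrib, swap, Finset.sum_ite_eq, Finset.mem_univ, if_true, two_mul]
  abel

namespace Matrix

section
variable {ι 𝕜 : Type*} [Fintype ι] [RCLike 𝕜]

lemma conjTranspose_mul_self_apply_self (X : Matrix ι ι 𝕜) (l : ι) :
    (Xᴴ * X) l l = ((∑ k, ‖X k l‖ ^ 2 : ℝ) : 𝕜) := by
  rw [mul_apply]
  push_cast
  exact Finset.sum_congr rfl fun k _ => by
    rw [conjTranspose_apply, RCLike.star_def, RCLike.conj_mul]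

lemma norm_conjTranspose_mul_apply_self_le (X Y : Matrix ι ι 𝕜) (l : ι) :
    ‖(Xᴴ * Y) l l‖ ≤ √(∑ a, ‖X a l‖ ^ 2) * √(∑ a, ‖Y a l‖ ^ 2) := by
  calc ‖(Xᴴ * Y) l l‖ ≤ ∑ a, ‖X a l‖ * ‖Y a l‖ := by
        rw [mul_apply]
        refine (norm_sum_le _ _).trans_eq (Finset.sum_congr rfl fun a _ => ?_)
        rw [norm_mul, conjTranspose_apply, norm_star]
    _ ≤ _ := Real.sum_mul_le_sqrt_mul_sqrt _ _ _

variable [DecidableEq ι]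

lemma conjTranspose_mul_diagonal_mul_apply_self (X : Matrix ι ι 𝕜) (f : ι → ℝ) (l : ι) :
    (Xᴴ * diagonal (RCLike.ofReal ∘ f : ι → 𝕜) * X) l l = ((∑ k, f k * ‖X k l‖ ^ 2 : ℝ) : 𝕜) := by
  rw [mul_apply]
  simp only [mul_diagonal, conjTranspose_apply, Function.comp_apply]
  push_cast
  refine Finset.sum_congr rfl fun k _ => ?_
  rw [mul_right_comm, RCLike.star_def, RCLike.conj_mul]
  ring

lemma sum_norm_sq_apply_of_mem_unitaryGroup {W : Matrix ι ι 𝕜} (hW : W ∈ unitaryGroup ι 𝕜)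
    (k : ι) : ∑ l, ‖W k l‖ ^ 2 = 1 := by
  have h := congr_fun₂ (mem_unitaryGroup_iff.mp hW) k k
  simp only [mul_apply, star_apply, RCLike.star_def, RCLike.mul_conj, one_apply_eq] at h
  exact_mod_cast h

namespace IsHermitian
variable {A B : Matrix ι ι 𝕜}

lemma re_trace_mul_sq_le (hA : A.IsHermitian) (hB : B.IsHermitian) :
    RCLike.re (A * B).trace ^ 2 ≤ RCLike.re (A * A).trace * RCLike.re (B * B).trace := by
  let _ := (1 : Matrix ι ι 𝕜).toMatrixSeminormedAddCommGroup PosSemidef.one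
  let _ := (1 : Matrix ι ι 𝕜).toMatrixInnerProductSpace PosSemidef.one
  have h := inner_mul_inner_self_le (𝕜 := 𝕜) A B
  have hinner : ∀ X Y : Matrix ι ι 𝕜, inner 𝕜 X Y = (Y * 1 * Xᴴ).trace := fun _ _ => rfl
  simp only [hinner, mul_one, hA.eq, hB.eq] at h
  rw [trace_mul_comm B A, ← sq] at h
  calc RCLike.re (A * B).trace ^ 2 = |RCLike.re (A * B).trace| ^ 2 := (sq_abs _).symm
    _ ≤ ‖(A * B).trace‖ ^ 2 := by gcongr; exact RCLike.abs_re_le_norm _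
    _ ≤ _ := h

lemma cfc_id (hA : A.IsHermitian) : hA.cfc id = A :=
  hA.spectral_theorem.symm

lemma conjTranspose_mul_cfc_mul_apply_self (hA : A.IsHermitian) (f : ℝ → ℝ)
    (X : Matrix ι ι 𝕜) (l : ι) :
    (Xᴴ * hA.cfc f * X) l l = ((∑ k, f (hA.eigenvalues k) *
      ‖(star (hA.eigenvectorUnitary : Matrix ι ι 𝕜) * X) k l‖ ^ 2 : ℝ) : 𝕜) := by
  rw [← conjTranspose_mul_diagonal_mul_apply_self, IsHermitian.cfc, Unitary.conjStarAlgAut_apply,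
    conjTranspose_mul, star_eq_conjTranspose, conjTranspose_conjTranspose]
  simp only [Matrix.mul_assoc]
  rfl

lemma trace_mul_cfc (hB : B.IsHermitian) (g : ℝ → ℝ) (X : Matrix ι ι 𝕜) :
    (X * hB.cfc g).trace = ∑ l, (g (hB.eigenvalues l) : 𝕜) *
      (star (hB.eigenvectorUnitary : Matrix ι ι 𝕜) * X * hB.eigenvectorUnitary) l l := by
  rw [IsHermitian.cfc, Unitary.conjStarAlgAut_apply, ← Matrix.mul_assoc, trace_mul_cycle,
    ← Matrix.mul_assoc]
  simp only [trace, diag, mul_diagonal, Function.comp_apply, mul_comm]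

noncomputable def eigenOverlap (hA : A.IsHermitian) (hB : B.IsHermitian) (k l : ι) : ℝ :=
  ‖(star (hA.eigenvectorUnitary : Matrix ι ι 𝕜) * hB.eigenvectorUnitary) k l‖ ^ 2

lemma eigenOverlap_nonneg (hA : A.IsHermitian) (hB : B.IsHermitian) (k l : ι) :
    0 ≤ hA.eigenOverlap hB k l :=
  sq_nonneg _

lemma sum_eigenOverlap (hA : A.IsHermitian) (hB : B.IsHermitian) (k : ι) :
    ∑ l, hA.eigenOverlap hB k l = 1 :=
  sum_norm_sq_apply_of_mem_unitaryGroup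
    (Submonoid.mul_mem _ (Unitary.star_mem hA.eigenvectorUnitary.2) hB.eigenvectorUnitary.2) k

lemma star_eigenvectorUnitary_mul_cfc_mul_apply_self (hA : A.IsHermitian) (hB : B.IsHermitian)
    (f : ℝ → ℝ) (l : ι) :
    (star (hB.eigenvectorUnitary : Matrix ι ι 𝕜) * hA.cfc f * hB.eigenvectorUnitary) l l
      = ((∑ k, f (hA.eigenvalues k) * hA.eigenOverlap hB k l : ℝ) : 𝕜) := by
  rw [star_eq_conjTranspose, conjTranspose_mul_cfc_mul_apply_self]
  rfl

lemma star_eigenvectorUnitary_mul_mul_apply_self (hA : A.IsHermitian) (hB : B.IsHermitian)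
    (l : ι) :
    (star (hB.eigenvectorUnitary : Matrix ι ι 𝕜) * A * hB.eigenvectorUnitary) l l
      = ((∑ k, hA.eigenvalues k * hA.eigenOverlap hB k l : ℝ) : 𝕜) := by
  conv_lhs => rw [← hA.cfc_id]
  exact star_eigenvectorUnitary_mul_cfc_mul_apply_self hA hB id l

lemma star_eigenvectorUnitary_mul_self_mul_apply_self (hB : B.IsHermitian) (l : ι) :
    (star (hB.eigenvectorUnitary : Matrix ι ι 𝕜) * B * hB.eigenvectorUnitary) l l
      = hB.eigenvalues l := by
  have h := hB.conjStarAlgAut_star_eigenvectorUnitary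
  rw [Unitary.conjStarAlgAut_star_apply] at h
  rw [h, diagonal_apply_eq, Function.comp_apply]

lemma eigenvalues_sum_smul_apply {I : Type*} [Fintype I] {ρ : I → Matrix ι ι 𝕜} (p : I → ℝ)
    (hρ : ∀ i, (ρ i).IsHermitian) (hσ : (∑ i, p i • ρ i).IsHermitian) (l : ι) :
    hσ.eigenvalues l = ∑ i, p i * ∑ k, (hρ i).eigenvalues k * (hρ i).eigenOverlap hσ k l := by
  apply RCLike.ofReal_injective (K := 𝕜)
  rw [← hσ.star_eigenvectorUnitary_mul_self_mul_apply_self]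
  simp only [Matrix.mul_sum, Matrix.sum_mul, Matrix.sum_apply, mul_smul_comm, smul_mul_assoc,
    smul_apply, (hρ _).star_eigenvectorUnitary_mul_mul_apply_self hσ]
  push_cast
  simp [RCLike.real_smul_eq_coe_mul]

lemma trace_cfc_mul_cfc (hA : A.IsHermitian) (hB : B.IsHermitian) (f g : ℝ → ℝ) :
    (hA.cfc f * hB.cfc g).trace = ((∑ k, ∑ l, f (hA.eigenvalues k) * g (hB.eigenvalues l) *
      hA.eigenOverlap hB k l : ℝ) : 𝕜) := by
  simp only [trace_mul_cfc, star_eigenvectorUnitary_mul_cfc_mul_apply_self]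
  push_cast
  simp only [Finset.mul_sum]
  rw [Finset.sum_comm]
  exact Finset.sum_congr rfl fun k _ => Finset.sum_congr rfl fun l _ => by ring

end IsHermitian
end
end Matrix

section DensityMatrix
variable {ι : Type} [Fintype ι] [DecidableEq ι]

lemma msqrt_eq_cfc {A : Matrix ι ι ℂ} (hA : A.PosSemidef) : msqrt A = cfc Real.sqrt A := by
  rw [msqrt, dif_pos hA, hA.1.cfc_eq, IsHermitian.cfc, Unitary.conjStarAlgAut_apply]
  rfl

lemma isHermitian_msqrt (A : Matrix ι ι ℂ) : (msqrt A).IsHermitian := by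
  by_cases hA : A.PosSemidef
  · rw [msqrt_eq_cfc hA]
    exact cfc_predicate _ _
  · rw [msqrt, dif_neg hA]
    exact isHermitian_zero

lemma msqrt_mul_msqrt {A : Matrix ι ι ℂ} (hA : A.PosSemidef) : msqrt A * msqrt A = A := by
  conv_rhs => rw [← cfc_id ℝ A hA.1]
  rw [msqrt_eq_cfc hA, ← cfc_mul Real.sqrt Real.sqrt A]
  refine cfc_congr fun x hx => ?_
  obtain ⟨k, rfl⟩ := hA.1.spectrum_real_eq_range_eigenvalues ▸ hx
  exact Real.mul_self_sqrt (hA.eigenvalues_nonneg k)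

lemma trace_msqrt {A : Matrix ι ι ℂ} (hA : A.PosSemidef) :
    (msqrt A).trace = ((∑ l, √(hA.1.eigenvalues l) : ℝ) : ℂ) := by
  rw [msqrt, dif_pos hA, trace_mul_cycle, Unitary.coe_star_mul_self, one_mul, trace_diagonal]
  push_cast
  rfl

lemma re_trace_msqrt_mul_msqrt {A B : Matrix ι ι ℂ} (hA : A.PosSemidef) (hB : B.PosSemidef) :
    (msqrt A * msqrt B).trace.re = ∑ k, ∑ l, √(hA.1.eigenvalues k) * √(hB.1.eigenvalues l) *
      hA.1.eigenOverlap hB.1 k l := by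
  rw [msqrt_eq_cfc hA, msqrt_eq_cfc hB, hA.1.cfc_eq, hB.1.cfc_eq, hA.1.trace_cfc_mul_cfc]
  simp only [Complex.coe_algebraMap, Complex.ofReal_re]

lemma re_trace_msqrt_mul_msqrt_nonneg {A B : Matrix ι ι ℂ} (hA : A.PosSemidef)
    (hB : B.PosSemidef) : 0 ≤ (msqrt A * msqrt B).trace.re := by
  rw [re_trace_msqrt_mul_msqrt hA hB]
  exact Finset.sum_nonneg fun k _ => Finset.sum_nonneg fun l _ =>
    mul_nonneg (by positivity) (hA.1.eigenOverlap_nonneg hB.1 k l)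

lemma re_trace_le_re_trace_msqrt_conjTranspose_mul_self (N : Matrix ι ι ℂ) :
    N.trace.re ≤ (msqrt (Nᴴ * N)).trace.re := by
  have hM := posSemidef_conjTranspose_mul_self N
  set V : Matrix ι ι ℂ := (hM.1.eigenvectorUnitary : Matrix ι ι ℂ)
  have hV : Vᴴ * V = 1 := Unitary.coe_star_mul_self hM.1.eigenvectorUnitary
  have hV' : V * Vᴴ = 1 := Unitary.coe_mul_star_self hM.1.eigenvectorUnitary
  have htrace : N.trace = ∑ l, (Vᴴ * (N * V)) l l := by
    change _ = (Vᴴ * (N * V)).trace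
    rw [← Matrix.mul_assoc, trace_mul_cycle, hV', one_mul]
  rw [htrace, trace_msqrt hM, Complex.re_sum, Complex.ofReal_re]
  refine Finset.sum_le_sum fun l _ => ?_
  have hcol : ∑ a, ‖V a l‖ ^ 2 = 1 := by
    have h := conjTranspose_mul_self_apply_self V l
    rw [hV, one_apply_eq] at h
    exact Complex.ofReal_eq_one.mp h.symm
  have hNcol : ∑ a, ‖(N * V) a l‖ ^ 2 = hM.1.eigenvalues l := by
    have h := conjTranspose_mul_self_apply_self (N * V) l
    rw [conjTranspose_mul, Matrix.mul_assoc, ← Matrix.mul_assoc Nᴴ, ← star_eq_conjTranspose,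
      ← Matrix.mul_assoc, hM.1.star_eigenvectorUnitary_mul_self_mul_apply_self] at h
    exact Complex.ofReal_injective h.symm
  calc ((Vᴴ * (N * V)) l l).re ≤ ‖(Vᴴ * (N * V)) l l‖ := Complex.re_le_norm _
    _ ≤ _ := norm_conjTranspose_mul_apply_self_le _ _ _
    _ = _ := by rw [hcol, hNcol, Real.sqrt_one, one_mul]

lemma re_trace_msqrt_mul_msqrt_le_fidelity (A : Matrix ι ι ℂ) {B : Matrix ι ι ℂ}
    (hB : B.PosSemidef) : (msqrt A * msqrt B).trace.re ≤ fidelity A B := by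
  -- `N = √B √A` has `tr N = tr (√A √B)` and `Nᴴ N = √A B √A`.
  have h := re_trace_le_re_trace_msqrt_conjTranspose_mul_self (msqrt B * msqrt A)
  rwa [trace_mul_comm, conjTranspose_mul, (isHermitian_msqrt A).eq, (isHermitian_msqrt B).eq,
    Matrix.mul_assoc, ← Matrix.mul_assoc (msqrt B), msqrt_mul_msqrt hB, ← Matrix.mul_assoc] at h

lemma vN_eq_sum_negMulLog {A : Matrix ι ι ℂ} (hA : A.IsHermitian) :
    vN A = ∑ k, Real.negMulLog (hA.eigenvalues k) := by
  rw [vN, dif_pos hA]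

lemma sub_two_mul_log_le_vN_sum_smul_sub {I : Type*} [Fintype I] (ρ : I → Matrix ι ι ℂ)
    (p : I → ℝ) (hρ : ∀ i, (ρ i).PosSemidef) (hρtr : ∀ i, (ρ i).trace = 1)
    (hp : ∀ i, 0 ≤ p i) (hp1 : ∑ i, p i = 1) :
    ∑ i, Real.negMulLog (p i) -
        2 * Real.log (∑ i, √(p i) * (msqrt (ρ i) * msqrt (∑ j, p j • ρ j)).trace.re)
      ≤ vN (∑ i, p i • ρ i) - ∑ i, p i * vN (ρ i) := by
  set σ := ∑ i, p i • ρ i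
  have hσ : σ.PosSemidef := posSemidef_sum _ fun i _ => (hρ i).smul (hp i)
  set q : I → ι → ℝ := fun i => (hρ i).1.eigenvalues
  set ν : I × ι → ℝ := fun x => p x.1 * q x.1 x.2
  set C : Matrix (I × ι) ι ℝ := fun x l => (hρ x.1).1.eigenOverlap hσ.1 x.2 l
  have hq1 : ∀ i, ∑ k, q i k = 1 := fun i => by
    simpa [hρtr i] using (congrArg Complex.re (hρ i).1.trace_eq_sum_eigenvalues).symm
  have hν1 : ∑ x, ν x = 1 := by
    simp only [ν, Fintype.sum_prod_type, ← Finset.mul_sum, hq1, mul_one, hp1]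
  have hμ : ν ᵥ* C = hσ.1.eigenvalues := funext fun l => by
    rw [hσ.1.eigenvalues_sum_smul_apply p fun i => (hρ i).1]
    simp only [vecMul, dotProduct, Fintype.sum_prod_type, Finset.mul_sum, mul_assoc, ν, C, q]
  have key := Real.neg_two_mul_log_le_sum_negMulLog_sub_of_vecMul_eq ν C _
    (fun x => mul_nonneg (hp x.1) ((hρ x.1).eigenvalues_nonneg x.2)) hν1
    (fun x l => (hρ x.1).1.eigenOverlap_nonneg hσ.1 x.2 l)
    (fun x => (hρ x.1).1.sum_eigenOverlap hσ.1 x.2) hμ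
  have hQ : ∑ x, ∑ l, C x l * (√(ν x) * √(hσ.1.eigenvalues l))
      = ∑ i, √(p i) * (msqrt (ρ i) * msqrt σ).trace.re := by
    simp only [re_trace_msqrt_mul_msqrt (hρ _) hσ, Fintype.sum_prod_type, Finset.mul_sum, ν,
      Real.sqrt_mul (hp _)]
    exact Finset.sum_congr rfl fun i _ => Finset.sum_congr rfl fun k _ =>
      Finset.sum_congr rfl fun l _ => by ring
  have hchain : ∑ x, Real.negMulLog (ν x) = ∑ i, p i * vN (ρ i) + ∑ i, Real.negMulLog (p i) := by
    simp only [Fintype.sum_prod_type, ν, Real.sum_negMulLog_mul_eq p q hq1,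
      vN_eq_sum_negMulLog (hρ _).1, q]
  rw [vN_eq_sum_negMulLog hσ.1, ← hQ]
  linarith

lemma sq_sum_mul_re_trace_msqrt_mul_msqrt_le {I : Type*} [Fintype I] (ρ : I → Matrix ι ι ℂ)
    (w : I → ℝ) {σ : Matrix ι ι ℂ} (hσ : σ.PosSemidef) :
    (∑ i, w i * (msqrt (ρ i) * msqrt σ).trace.re) ^ 2
      ≤ (∑ i, ∑ j, w i * w j * (msqrt (ρ i) * msqrt (ρ j)).trace.re) * σ.trace.re := by
  set A := ∑ i, w i • msqrt (ρ i)
  have hA : A.IsHermitian :=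
    isSelfAdjoint_sum _ fun i _ => (IsSelfAdjoint.all (w i)).smul (isHermitian_msqrt _)
  have h := hA.re_trace_mul_sq_le (isHermitian_msqrt σ)
  rw [msqrt_mul_msqrt hσ] at h
  convert h using 3
  · simp [A, Finset.sum_mul, trace_sum]
  · simp only [A, Finset.sum_mul, Finset.mul_sum, trace_sum]
    simp only [Algebra.mul_smul_comm, Algebra.smul_mul_assoc, trace_smul, Complex.real_smul,
      map_sum, RCLike.mul_re, RCLike.re_to_complex, Complex.ofReal_re, RCLike.im_to_complex,
      Complex.ofReal_im, zero_mul, sub_zero]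
    rw [Finset.sum_comm]
    exact Finset.sum_congr rfl fun _ _ => Finset.sum_congr rfl fun _ _ => by ring
  · rfl

lemma sum_sum_sqrt_mul_sqrt_mul_re_trace_msqrt_mul_msqrt {I : Type*} [Fintype I] [LinearOrder I]
    (ρ : I → Matrix ι ι ℂ) (p : I → ℝ) (hρ : ∀ i, (ρ i).PosSemidef) (hρtr : ∀ i, (ρ i).trace = 1)
    (hp : ∀ i, 0 ≤ p i) (hp1 : ∑ i, p i = 1) :
    ∑ i, ∑ j, √(p i) * √(p j) * (msqrt (ρ i) * msqrt (ρ j)).trace.re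
      = 1 + 2 * ∑ i, ∑ j, if i < j then √(p i * p j) * (msqrt (ρ i) * msqrt (ρ j)).trace.re
          else 0 := by
  rw [Finset.sum_sum_eq_sum_add_two_mul_sum_lt fun i j => by rw [trace_mul_comm]; ring]
  simp only [msqrt_mul_msqrt (hρ _), hρtr, Complex.one_re, mul_one, Real.mul_self_sqrt (hp _),
    hp1, ← Real.sqrt_mul (hp _)]

end DensityMatrix

/-- **Lower bound on the concavity gap of the von Neumann entropy.** For density
matrices `ρ_1, …, ρ_n` and a probability distribution `(p_i)`:
`H(Σ p_i ρ_i) − Σ p_i H(ρ_i) ≥ Σ (−p_i ln p_i) − ln(1 + 2 Σ_{i<j} √(p_i p_j) Tr[√ρ_i √ρ_j])`,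
each overlap `Tr[√ρ_i √ρ_j]` being a nonnegative real number; and the same bound holds
with `Tr[√ρ_i √ρ_j]` replaced by the fidelity `F(ρ_i, ρ_j)`. -/
theorem vN_concavity_lower_bound (n d : ℕ)
    (ρ : Fin n → Matrix (Fin d) (Fin d) ℂ) (p : Fin n → ℝ)
    (hρ : ∀ i, (ρ i).PosSemidef) (hρtr : ∀ i, (ρ i).trace = 1)
    (hp : ∀ i, 0 ≤ p i) (hp1 : ∑ i, p i = 1) :
    (∀ i j, 0 ≤ ((msqrt (ρ i) * msqrt (ρ j)).trace).re)
    ∧ vN (∑ i, p i • ρ i) - ∑ i, p i * vN (ρ i)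
        ≥ (∑ i, Real.negMulLog (p i)) -
          Real.log (1 + 2 * ∑ i, ∑ j, if i < j then
            Real.sqrt (p i * p j) * ((msqrt (ρ i) * msqrt (ρ j)).trace).re else 0)
    ∧ vN (∑ i, p i • ρ i) - ∑ i, p i * vN (ρ i)
        ≥ (∑ i, Real.negMulLog (p i)) -
          Real.log (1 + 2 * ∑ i, ∑ j, if i < j then
            Real.sqrt (p i * p j) * fidelity (ρ i) (ρ j) else 0) := by
  set σ := ∑ i, p i • ρ i
  have hσ : σ.PosSemidef := posSemidef_sum _ fun i _ => (hρ i).smul (hp i)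
  have hσtr : σ.trace.re = 1 := by simp [σ, trace_sum, trace_smul, hρtr, hp1]
  have hoverlap (i j : Fin n) : 0 ≤ (msqrt (ρ i) * msqrt (ρ j)).trace.re :=
    re_trace_msqrt_mul_msqrt_nonneg (hρ i) (hρ j)
  set T := 1 + 2 * ∑ i, ∑ j, if i < j then
    √(p i * p j) * (msqrt (ρ i) * msqrt (ρ j)).trace.re else 0
  have hQ := sq_sum_mul_re_trace_msqrt_mul_msqrt_le ρ (fun i => √(p i)) hσ
  rw [sum_sum_sqrt_mul_sqrt_mul_re_trace_msqrt_mul_msqrt ρ p hρ hρtr hp hp1, hσtr, mul_one] at hQ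
  have hT1 : 1 ≤ T := le_add_of_nonneg_right <| mul_nonneg zero_le_two <|
    Finset.sum_nonneg fun i _ => Finset.sum_nonneg fun j _ =>
      ite_nonneg (mul_nonneg (Real.sqrt_nonneg _) (hoverlap i j)) le_rfl
  have hTF : T ≤ 1 + 2 * ∑ i, ∑ j, if i < j then √(p i * p j) * fidelity (ρ i) (ρ j) else 0 := by
    simp only [T]
    gcongr with i _ j _
    split_ifs
    · exact mul_le_mul_of_nonneg_left (re_trace_msqrt_mul_msqrt_le_fidelity _ (hρ j))
        (Real.sqrt_nonneg _)
    · rfl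
  have hgap := sub_two_mul_log_le_vN_sum_smul_sub ρ p hρ hρtr hp hp1
  have hlog := Real.two_mul_log_le_log_of_sq_le hQ hT1
  refine ⟨hoverlap, by linarith, by linarith [Real.log_le_log (by linarith) hTF]⟩
end
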